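/- arXiv:cs/0401003 — 4 statements merged into one kernel-verified Lean document; each statement's English description precedes it below -/
import Mathlib

section
/- Let s balls be chosen uniformly at random without replacement from a set of n balls, of which r are red, and let r' be the random variable counting the number of red balls drawn. Let p := r/n. Then for every g ≥ 0, P[r' ≥ ps + g] ≤ exp(−2g²/s). -/
open MeasureTheory
open scoped ENNReal NNReal

lemma amgm2 {a b w₁ w₂ : ℝ} (ha : 0 ≤ a) (hb : 0 ≤ b) (hw₁ : 0 ≤ w₁) (hw₂ : 0 ≤ w₂)
    (hw : w₁ + w₂ = 1) (k l m : ℕ) (hk : (k : ℝ) = w₁ * m) (hl : (l : ℝ) = w₂ * m) :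
    a ^ k * b ^ l ≤ (w₁ * a + w₂ * b) ^ m := by
  have h := Real.geom_mean_le_arith_mean2_weighted hw₁ hw₂ ha hb hw
  have hmean : 0 ≤ a ^ w₁ * b ^ w₂ :=
    mul_nonneg (Real.rpow_nonneg ha _) (Real.rpow_nonneg hb _)
  calc a ^ k * b ^ l = (a ^ w₁ * b ^ w₂) ^ m := by
        rw [mul_pow, ← Real.rpow_natCast (a ^ w₁) m, ← Real.rpow_natCast (b ^ w₂) m,
          ← Real.rpow_mul ha, ← Real.rpow_mul hb, ← hk, ← hl,
          Real.rpow_natCast, Real.rpow_natCast]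
    _ ≤ (w₁ * a + w₂ * b) ^ m := pow_le_pow_left₀ hmean h m

lemma step_ineq (m s' r : ℕ) (hs : s' + 1 ≤ m) (hr1 : 1 ≤ r) (hrm : r ≤ m + 1)
    (w : ℝ) (hw : 0 ≤ w) :
    (m.choose (s' + 1) : ℝ) * (1 + (((r : ℝ) - 1) / m) * w) ^ (s' + 1)
      + (1 + w) * (m.choose s' : ℝ) * (1 + (((r : ℝ) - 1) / m) * w) ^ s'
    ≤ ((m + 1).choose (s' + 1) : ℝ) * (1 + ((r : ℝ) / (m + 1)) * w) ^ (s' + 1) := by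
  have hm1 : 1 ≤ m := le_trans (Nat.le_add_left 1 s') hs
  have hm0 : (0 : ℝ) < m := by exact_mod_cast hm1
  have hr1' : (1 : ℝ) ≤ r := by exact_mod_cast hr1
  have hrm' : (r : ℝ) ≤ (m : ℝ) + 1 := by exact_mod_cast hrm
  have hsm' : (s' : ℝ) + 1 ≤ (m : ℝ) := by exact_mod_cast hs
  set p' : ℝ := ((r : ℝ) - 1) / m with hp'
  have hp'0 : 0 ≤ p' := div_nonneg (by linarith) hm0.le
  set c : ℝ := (((m : ℝ) + 1 - ((s' : ℝ) + 1)) * p' + ((s' : ℝ) + 1)) / ((m : ℝ) + 1) with hc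
  have hc0 : 0 ≤ c := by
    apply div_nonneg _ (by positivity)
    have h1 : (0:ℝ) ≤ ((m : ℝ) + 1 - ((s' : ℝ) + 1)) := by linarith
    positivity
  set B : ℝ := 1 + p' * w with hB
  have hB0 : (0 : ℝ) ≤ B := by positivity
  set p : ℝ := (r : ℝ) / ((m : ℝ) + 1) with hp
  set s : ℕ := s' + 1 with hsdef
  have hscast : (s : ℝ) = (s' : ℝ) + 1 := by rw [hsdef]; push_cast; ring
  have hs0 : (0 : ℝ) < s := by rw [hscast]; positivity
  -- choose identities
  have hch1 : (m.choose s : ℝ) * ((m : ℝ) + 1) = ((m + 1).choose s : ℝ) * ((m : ℝ) + 1 - s) := by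
    have h0 : m.choose s * (m + 1) = (m + 1).choose s * (m + 1 - s) := Nat.choose_mul_succ_eq m s
    have h1 : ((m.choose s * (m + 1) : ℕ) : ℝ) = (((m + 1).choose s * (m + 1 - s) : ℕ) : ℝ) := by
      rw [h0]
    push_cast [Nat.cast_sub (show s ≤ m + 1 from le_trans hs (Nat.le_succ m))] at h1
    rw [hscast] at h1 ⊢; linarith [h1]
  have hch2 : ((m : ℝ) + 1) * (m.choose s' : ℝ) = ((m + 1).choose s : ℝ) * s := by
    have h0 := Nat.add_one_mul_choose_eq m s'
    have h1 : (((m + 1) * m.choose s' : ℕ) : ℝ) = (((m + 1).choose (s' + 1) * (s' + 1) : ℕ) : ℝ) := by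
      exact_mod_cast congrArg (fun x : ℕ => (x : ℝ)) h0
    push_cast at h1
    rw [hscast]; push_cast
    linarith [h1]
  -- key AM-GM
  have hkey : (1 + c * w) * B ^ s' ≤ (1 + p * w) ^ s := by
    have hmean : (1 / (s : ℝ)) * (1 + c * w) + ((s' : ℝ) / s) * B = 1 + p * w := by
      rw [hc, hB, hp, hp', hscast]
      field_simp
      ring
    calc (1 + c * w) * B ^ s' = (1 + c * w) ^ 1 * B ^ s' := by ring
      _ ≤ ((1 / (s:ℝ)) * (1 + c * w) + ((s':ℝ) / s) * B) ^ s := by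
          apply amgm2 (by positivity) hB0 (by positivity) (by positivity)
          · rw [← add_div, hscast, add_comm]
            exact div_self (by positivity)
          · rw [Nat.cast_one]; field_simp
          · field_simp
      _ = (1 + p * w) ^ s := by rw [hmean]
  -- expand choose coefficients
  have hCpos : (0 : ℝ) ≤ ((m + 1).choose s : ℝ) := by positivity
  have e1 : (m.choose s : ℝ) = ((m + 1).choose s : ℝ) * (((m : ℝ) + 1 - s) / ((m : ℝ) + 1)) := by
    rw [mul_div_assoc', eq_div_iff (by positivity : ((m:ℝ)+1) ≠ 0)]
    linarith [hch1]
  have e2 : (m.choose s' : ℝ) = ((m + 1).choose s : ℝ) * ((s : ℝ) / ((m : ℝ) + 1)) := by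
    rw [mul_div_assoc', eq_div_iff (by positivity : ((m:ℝ)+1) ≠ 0)]
    linarith [hch2]
  have hexpand : (m.choose s : ℝ) * B ^ s + (1 + w) * (m.choose s' : ℝ) * B ^ s'
      = ((m + 1).choose s : ℝ) * ((1 + c * w) * B ^ s') := by
    have hBs : B ^ s = B * B ^ s' := by rw [hsdef]; ring
    rw [hBs, e1, e2, hc, hB, hscast]
    field_simp
    ring
  show (m.choose s : ℝ) * B ^ s + (1 + w) * (m.choose s' : ℝ) * B ^ s'
      ≤ ((m + 1).choose s : ℝ) * (1 + p * w) ^ s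
  rw [hexpand]
  exact mul_le_mul_of_nonneg_left hkey hCpos

open Finset in
lemma pgf_bound {ι : Type*} [DecidableEq ι] (z : ℝ) (hz : 1 ≤ z) :
    ∀ (m : ℕ) (U R : Finset ι), R ⊆ U → U.card = m → ∀ s : ℕ, s ≤ m →
    ∑ A ∈ U.powersetCard s, z ^ (A ∩ R).card ≤
      (m.choose s : ℝ) * (1 + ((R.card : ℝ) / m) * (z - 1)) ^ s := by
  have hz0 : (0 : ℝ) ≤ z := le_trans zero_le_one hz
  intro m
  induction m with
  | zero =>
    intro U R hRU hU s hsm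
    interval_cases s
    rw [Finset.card_eq_zero] at hU
    subst hU
    simp
  | succ m ih =>
    intro U R hRU hU s hsm
    rcases eq_or_ne R ∅ with hRe | hRe
    · subst hRe
      simp only [Finset.inter_empty, Finset.card_empty, pow_zero, Finset.sum_const, nsmul_eq_mul,
        mul_one, Finset.card_powersetCard, hU, Finset.card_empty]
      rw [Nat.cast_zero, zero_div, zero_mul, add_zero, one_pow, mul_one]
    · obtain ⟨e, he⟩ := Finset.nonempty_iff_ne_empty.mpr hRe
      have heU : e ∈ U := hRU he
      rcases Nat.eq_zero_or_pos s with hs0 | hs1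
      · subst hs0
        simp
      · obtain ⟨s', rfl⟩ : ∃ s', s = s' + 1 := ⟨s - 1, (Nat.succ_pred_eq_of_pos hs1).symm⟩
        rcases eq_or_lt_of_le hsm with hseq | hslt
        · -- s = U.card : powersetCard U.card U = {U}
          rw [hseq, ← hU, Finset.powersetCard_self, Finset.sum_singleton,
            Finset.inter_eq_right.mpr hRU, hU, Nat.choose_self, Nat.cast_one, one_mul]
          push_cast
          have hrc : R.card ≤ m + 1 := by rw [← hU]; exact Finset.card_le_card hRU
          have hm0 : (0 : ℝ) < (m : ℝ) + 1 := by positivity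
          have := amgm2 (a := z) (b := 1) (w₁ := (R.card : ℝ) / (m + 1))
            (w₂ := ((m + 1 - R.card : ℕ) : ℝ) / (m + 1)) hz0 zero_le_one
            (by positivity) (by positivity)
            (by rw [← add_div, div_eq_one_iff_eq hm0.ne']
                push_cast [Nat.cast_sub hrc]; ring)
            R.card (m + 1 - R.card) (m + 1)
            (by push_cast; field_simp) (by push_cast; field_simp)
          calc z ^ R.card = z ^ R.card * 1 ^ (m + 1 - R.card) := by rw [one_pow, mul_one]
            _ ≤ ((R.card : ℝ) / (m + 1) * z + ((m + 1 - R.card : ℕ) : ℝ) / (m + 1) * 1) ^ (m + 1) := by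
                  exact_mod_cast this
            _ = (1 + ((R.card : ℝ) / (m + 1)) * (z - 1)) ^ (m + 1) := by
                  congr 1
                  push_cast [Nat.cast_sub hrc]
                  field_simp
                  ring
        · -- main case : s + 1 ≤ m, split on e
          have hsm' : s' + 1 ≤ m := Nat.lt_succ_iff.mp hslt
          set U' := U.erase e with hU'
          have heU' : e ∉ U' := Finset.notMem_erase e U
          have hUins : insert e U' = U := Finset.insert_erase heU
          have hU'card : U'.card = m := by
            rw [hU', Finset.card_erase_of_mem heU, hU]; rfl
          set R' := R.erase e with hR'
          have hR'U' : R' ⊆ U' := Finset.erase_subset_erase e hRU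
          have hR'card : R'.card = R.card - 1 := Finset.card_erase_of_mem he
          have hr1 : 1 ≤ R.card := Finset.card_pos.mpr ⟨e, he⟩
          have hrm : R.card ≤ m + 1 := by rw [← hU]; exact Finset.card_le_card hRU
          have hsplit : U.powersetCard (s' + 1) =
              U'.powersetCard (s' + 1) ∪ (U'.powersetCard s').image (insert e) := by
            rw [← hUins]; exact Finset.powersetCard_succ_insert heU' s'
          have hdisj : Disjoint (U'.powersetCard (s' + 1)) ((U'.powersetCard s').image (insert e)) := by
            rw [Finset.disjoint_left]
            intro A hA hA'
            obtain ⟨B, hB, rfl⟩ := Finset.mem_image.mp hA'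
            have : insert e B ⊆ U' := (Finset.mem_powersetCard.mp hA).1
            exact heU' (this (Finset.mem_insert_self e B))
          have hinter : ∀ A ∈ U'.powersetCard (s' + 1), A ∩ R = A ∩ R' := by
            intro A hA
            have hAU' : A ⊆ U' := (Finset.mem_powersetCard.mp hA).1
            have heA : e ∉ A := fun h => heU' (hAU' h)
            rw [hR', Finset.inter_erase, Finset.erase_eq_of_notMem]
            simp [heA]
          have hinter2 : ∀ B ∈ U'.powersetCard s',
              ((insert e B) ∩ R).card = (B ∩ R').card + 1 := by
            intro B hB
            have hBU' : B ⊆ U' := (Finset.mem_powersetCard.mp hB).1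
            have heB : e ∉ B := fun h => heU' (hBU' h)
            rw [Finset.insert_inter_of_mem he, Finset.card_insert_of_notMem (by simp [heB]),
              hR', Finset.inter_erase, Finset.erase_eq_of_notMem (by simp [heB])]
          have hinj : ∀ B ∈ U'.powersetCard s', ∀ C ∈ U'.powersetCard s',
              insert e B = insert e C → B = C := by
            intro B hB C hC hBC
            have heB : e ∉ B := fun h => heU' ((Finset.mem_powersetCard.mp hB).1 h)
            have heC : e ∉ C := fun h => heU' ((Finset.mem_powersetCard.mp hC).1 h)
            rw [← Finset.erase_insert heB, ← Finset.erase_insert heC, hBC]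
          have hsum : ∑ A ∈ U.powersetCard (s' + 1), z ^ (A ∩ R).card
              = (∑ A ∈ U'.powersetCard (s' + 1), z ^ (A ∩ R').card)
                + z * ∑ B ∈ U'.powersetCard s', z ^ (B ∩ R').card := by
            rw [hsplit, Finset.sum_union hdisj, Finset.sum_image hinj]
            congr 1
            · exact Finset.sum_congr rfl fun A hA => by rw [hinter A hA]
            · rw [Finset.mul_sum]
              exact Finset.sum_congr rfl fun B hB => by rw [hinter2 B hB, pow_succ]; ring
          rw [hsum]
          have ihs1 := ih U' R' hR'U' hU'card (s' + 1) hsm'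
          have ihs2 := ih U' R' hR'U' hU'card s' (le_trans (Nat.le_succ s') hsm')
          have hterm_nonneg : (0:ℝ) ≤ ∑ B ∈ U'.powersetCard s', z ^ (B ∩ R').card :=
            Finset.sum_nonneg fun B _ => pow_nonneg hz0 _
          have hR'cast : ((R'.card : ℝ)) = (R.card : ℝ) - 1 := by
            rw [hR'card]; push_cast [Nat.cast_sub hr1]; ring
          calc (∑ A ∈ U'.powersetCard (s' + 1), z ^ (A ∩ R').card)
                + z * ∑ B ∈ U'.powersetCard s', z ^ (B ∩ R').card
              ≤ (m.choose (s' + 1) : ℝ) * (1 + ((R'.card : ℝ) / m) * (z - 1)) ^ (s' + 1)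
                + z * ((m.choose s' : ℝ) * (1 + ((R'.card : ℝ) / m) * (z - 1)) ^ s') := by
                apply add_le_add ihs1
                exact mul_le_mul_of_nonneg_left ihs2 hz0
            _ = (m.choose (s' + 1) : ℝ) * (1 + (((R.card : ℝ) - 1) / m) * (z - 1)) ^ (s' + 1)
                + (1 + (z - 1)) * (m.choose s' : ℝ) * (1 + (((R.card : ℝ) - 1) / m) * (z - 1)) ^ s' := by
                rw [hR'cast]; ring
            _ ≤ ((m + 1).choose (s' + 1) : ℝ) * (1 + ((R.card : ℝ) / (m + 1)) * (z - 1)) ^ (s' + 1) := by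
                have := step_ineq m s' R.card hsm' hr1 hrm (z - 1) (by linarith)
                exact_mod_cast this
            _ = (((m+1).choose (s' + 1) : ℕ) : ℝ) * (1 + ((R.card : ℝ) / ((m+1 : ℕ) : ℝ)) * (z - 1)) ^ (s' + 1) := by
                push_cast; ring_nf


lemma hoeffding_lemma {p : ℝ} (hp0 : 0 ≤ p) (hp1 : p ≤ 1) {t : ℝ} (ht : 0 ≤ t) :
    1 + p * (Real.exp t - 1) ≤ Real.exp (p * t + t ^ 2 / 8) := by
  set D : ℝ → ℝ := fun u => 1 - p + p * Real.exp u with hD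
  have hDpos : ∀ u : ℝ, 0 < D u := by
    intro u
    rcases eq_or_lt_of_le hp0 with h | h
    · simp [hD, ← h]
    · have : 0 < p * Real.exp u := mul_pos h (Real.exp_pos u)
      simp only [hD]; linarith
  set f : ℝ → ℝ := fun u => p * u + u ^ 2 / 8 - Real.log (D u) with hf
  set g : ℝ → ℝ := fun u => p + u / 4 - p * Real.exp u / D u with hg
  have hDderiv : ∀ u, HasDerivAt D (p * Real.exp u) u := by
    intro u
    exact ((Real.hasDerivAt_exp u).const_mul p).const_add (1 - p)
  have hfderiv : ∀ u, HasDerivAt f (g u) u := by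
    intro u
    have h1 : HasDerivAt (fun u : ℝ => p * u + u ^ 2 / 8) (p + u / 4) u := by
      have := ((hasDerivAt_id u).const_mul p).add
        (((hasDerivAt_pow 2 u)).div_const 8)
      exact this.congr_deriv (by norm_num <;> ring)
    have h2 : HasDerivAt (fun u => Real.log (D u)) (p * Real.exp u / D u) u :=
      (hDderiv u).log (hDpos u).ne'
    exact h1.sub h2
  have hgderiv : ∀ u, HasDerivAt g (1 / 4 - p * (1 - p) * Real.exp u / (D u) ^ 2) u := by
    intro u
    have h1 : HasDerivAt (fun u : ℝ => p + u / 4) (1 / 4) u := by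
      simpa using ((hasDerivAt_id u).div_const 4).const_add p
    have h2 : HasDerivAt (fun u => p * Real.exp u / D u)
        ((p * Real.exp u * D u - p * Real.exp u * (p * Real.exp u)) / (D u) ^ 2) u :=
      ((Real.hasDerivAt_exp u).const_mul p).div (hDderiv u) (hDpos u).ne'
    have := h1.sub h2
    refine this.congr_deriv ?_
    have hDu := (hDpos u).ne'
    simp only [hD]
    ring
  have hgnonneg : ∀ u, 0 ≤ 1 / 4 - p * (1 - p) * Real.exp u / (D u) ^ 2 := by
    intro u
    have hDu : 0 < (D u) ^ 2 := pow_pos (hDpos u) 2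
    rw [sub_nonneg, div_le_iff₀ hDu]
    have hsq : 0 ≤ ((1 - p) - p * Real.exp u) ^ 2 := sq_nonneg _
    simp only [hD] at hsq ⊢
    nlinarith [hsq]
  have hgmono : Monotone g :=
    monotone_of_deriv_nonneg (fun u => (hgderiv u).differentiableAt)
      (fun u => by rw [(hgderiv u).deriv]; exact hgnonneg u)
  have hg0 : g 0 = 0 := by
    simp only [hg, hD]
    simp
  have hgnn : ∀ u, 0 ≤ u → 0 ≤ g u := fun u hu => hg0 ▸ hgmono hu
  have hfmono : MonotoneOn f (Set.Ici (0:ℝ)) := by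
    apply monotoneOn_of_deriv_nonneg (convex_Ici 0)
    · exact Continuous.continuousOn
        (Differentiable.continuous (fun u => (hfderiv u).differentiableAt))
    · intro u _
      exact (hfderiv u).differentiableAt.differentiableWithinAt
    · intro u hu
      rw [(hfderiv u).deriv]
      exact hgnn u (le_of_lt (by simpa using hu))
  have hf0 : f 0 = 0 := by simp [hf, hD]
  have hft : 0 ≤ f t := hf0 ▸ hfmono Set.self_mem_Ici (Set.mem_Ici.mpr ht) ht
  have hlog : Real.log (D t) ≤ p * t + t ^ 2 / 8 := by
    simp only [hf] at hft; linarith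
  have := Real.exp_le_exp.mpr hlog
  rw [Real.exp_log (hDpos t)] at this
  simp only [hD] at this
  linarith


/-- Hoeffding's tail bound for the hypergeometric distribution:
`s` balls are drawn uniformly at random (without replacement) from `n` balls,
`r` of which are red; `(S ω ∩ R).card` is the number of red balls drawn. -/
theorem hypergeometric_tail
    (n r s : ℕ) (hr : r ≤ n) (hs : 1 ≤ s) (hsn : s ≤ n)
    (R : Finset (Fin n)) (hR : R.card = r)
    {Ω : Type*} [MeasurableSpace Ω] (μ : Measure Ω) [IsProbabilityMeasure μ]
    (S : Ω → Finset (Fin n)) (hScard : ∀ ω, (S ω).card = s)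
    (hunif : ∀ A : Finset (Fin n), A.card = s →
      μ {ω | S ω = A} = 1 / (n.choose s))
    (g : ℝ) (hg : 0 ≤ g) :
    μ {ω | ((r : ℝ) / n) * s + g ≤ ((S ω ∩ R).card : ℝ)} ≤
      ENNReal.ofReal (Real.exp (-2 * g ^ 2 / s)) := by
  rcases eq_or_lt_of_le hg with hg0 | hgpos
  · -- g = 0
    have : (-2 : ℝ) * g ^ 2 / s = 0 := by rw [← hg0]; ring
    rw [this, Real.exp_zero, ENNReal.ofReal_one]
    exact prob_le_one
  -- g > 0
  have hn1 : 1 ≤ n := le_trans hs hsn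
  have hn0 : (0 : ℝ) < n := by exact_mod_cast hn1
  have hs0 : (0 : ℝ) < s := by exact_mod_cast hs
  set p : ℝ := (r : ℝ) / n with hp
  have hp0 : 0 ≤ p := by positivity
  have hp1 : p ≤ 1 := by
    rw [hp, div_le_one hn0]; exact_mod_cast hr
  set t : ℝ := 4 * g / s with hts
  have ht : 0 < t := by positivity
  set z : ℝ := Real.exp t with hzdef
  have hz1 : 1 ≤ z := Real.one_le_exp ht.le
  have hz0 : (0 : ℝ) ≤ z := le_trans zero_le_one hz1
  set Q : ℝ := p * s + g with hQ
  set T : Finset (Finset (Fin n)) :=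
    (Finset.univ.powersetCard s).filter (fun A => Q ≤ ((A ∩ R).card : ℝ)) with hT
  set C : ℕ := n.choose s with hC
  have hCpos : 0 < C := Nat.choose_pos hsn
  have hCr : (0 : ℝ) < C := by exact_mod_cast hCpos
  -- measure bound
  have hsub : {ω | p * s + g ≤ ((S ω ∩ R).card : ℝ)} ⊆ ⋃ A ∈ T, {ω | S ω = A} := by
    intro ω hω
    refine Set.mem_biUnion (show S ω ∈ T from ?_) rfl
    simp only [hT, Finset.mem_filter, Finset.mem_powersetCard_univ]
    exact ⟨hScard ω, hω⟩
  have hmeas : μ {ω | p * s + g ≤ ((S ω ∩ R).card : ℝ)} ≤ (T.card : ℝ≥0∞) * (1 / (C : ℝ≥0∞)) := by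
    calc μ {ω | p * s + g ≤ ((S ω ∩ R).card : ℝ)} ≤ μ (⋃ A ∈ T, {ω | S ω = A}) :=
          measure_mono hsub
      _ ≤ ∑ A ∈ T, μ {ω | S ω = A} := measure_biUnion_finset_le T _
      _ = ∑ A ∈ T, 1 / (C : ℝ≥0∞) := by
          refine Finset.sum_congr rfl fun A hA => ?_
          simp only [hT, Finset.mem_filter, Finset.mem_powersetCard_univ] at hA
          exact hunif A hA.1
      _ = (T.card : ℝ≥0∞) * (1 / (C : ℝ≥0∞)) := by
          rw [Finset.sum_const, nsmul_eq_mul]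
  -- real bound on T.card
  have hcount : (T.card : ℝ) ≤ (C : ℝ) * Real.exp (-2 * g ^ 2 / s) := by
    have h1 : ∀ A ∈ T, Real.exp (t * Q) ≤ z ^ (A ∩ R).card := by
      intro A hA
      simp only [hT, Finset.mem_filter] at hA
      rw [hzdef, ← Real.exp_nat_mul]
      exact Real.exp_le_exp.mpr (by
        have := hA.2
        calc t * Q ≤ t * ((A ∩ R).card : ℝ) := by
              exact mul_le_mul_of_nonneg_left this ht.le
          _ = ((A ∩ R).card : ℝ) * t := mul_comm _ _)
    have h2 : (T.card : ℝ) * Real.exp (t * Q) ≤ ∑ A ∈ T, z ^ (A ∩ R).card := by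
      calc (T.card : ℝ) * Real.exp (t * Q) = ∑ _A ∈ T, Real.exp (t * Q) := by
            rw [Finset.sum_const, nsmul_eq_mul]
        _ ≤ ∑ A ∈ T, z ^ (A ∩ R).card := Finset.sum_le_sum h1
    have h3 : ∑ A ∈ T, z ^ (A ∩ R).card ≤ ∑ A ∈ Finset.univ.powersetCard s, z ^ (A ∩ R).card := by
      apply Finset.sum_le_sum_of_subset_of_nonneg (Finset.filter_subset _ _)
      intro A _ _; positivity
    have h4 := pgf_bound z hz1 n Finset.univ R (Finset.subset_univ R)
      (by simp) s hsn
    rw [hR] at h4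
    have h5 : (1 + ((r : ℝ) / n) * (z - 1)) ^ s ≤ Real.exp ((s : ℝ) * (p * t + t ^ 2 / 8)) := by
      have hbase : 1 + p * (z - 1) ≤ Real.exp (p * t + t ^ 2 / 8) := hoeffding_lemma hp0 hp1 ht.le
      rw [hp] at hbase
      calc (1 + ((r : ℝ) / n) * (z - 1)) ^ s ≤ (Real.exp (p * t + t ^ 2 / 8)) ^ s := by
            have h6 : (0:ℝ) ≤ ((r : ℝ) / n) * (z - 1) :=
              mul_nonneg (by positivity) (by linarith)
            apply pow_le_pow_left₀ (by linarith) hbase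
        _ = Real.exp ((s : ℝ) * (p * t + t ^ 2 / 8)) := (Real.exp_nat_mul _ s).symm
    have hEsplit : Real.exp ((s : ℝ) * (p * t + t ^ 2 / 8))
        = Real.exp (-2 * g ^ 2 / s) * Real.exp (t * Q) := by
      rw [← Real.exp_add]
      congr 1
      rw [hQ, hts]
      field_simp
      ring
    have hchain : (T.card : ℝ) * Real.exp (t * Q)
        ≤ ((C : ℝ) * Real.exp (-2 * g ^ 2 / s)) * Real.exp (t * Q) := by
      calc (T.card : ℝ) * Real.exp (t * Q) ≤ ∑ A ∈ Finset.univ.powersetCard s, z ^ (A ∩ R).card :=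
            le_trans h2 h3
        _ ≤ (C : ℝ) * (1 + ((r : ℝ) / n) * (z - 1)) ^ s := h4
        _ ≤ (C : ℝ) * Real.exp ((s : ℝ) * (p * t + t ^ 2 / 8)) :=
            mul_le_mul_of_nonneg_left h5 hCr.le
        _ = ((C : ℝ) * Real.exp (-2 * g ^ 2 / s)) * Real.exp (t * Q) := by
            rw [hEsplit]; ring
    exact le_of_mul_le_mul_right hchain (Real.exp_pos _)
  -- ENNReal conversion
  have hcast : (T.card : ℝ≥0∞) ≤ (C : ℝ≥0∞) * ENNReal.ofReal (Real.exp (-2 * g ^ 2 / s)) := by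
    rw [← ENNReal.ofReal_natCast T.card, ← ENNReal.ofReal_natCast C,
      ← ENNReal.ofReal_mul (by positivity)]
    exact ENNReal.ofReal_le_ofReal hcount
  calc μ {ω | p * s + g ≤ ((S ω ∩ R).card : ℝ)} ≤ (T.card : ℝ≥0∞) * (1 / (C : ℝ≥0∞)) := hmeas
    _ ≤ ((C : ℝ≥0∞) * ENNReal.ofReal (Real.exp (-2 * g ^ 2 / s))) * (1 / (C : ℝ≥0∞)) :=
        mul_le_mul_left hcast _
    _ = ENNReal.ofReal (Real.exp (-2 * g ^ 2 / s)) := by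
        rw [one_div, mul_comm (C : ℝ≥0∞), mul_assoc,
          ENNReal.mul_inv_cancel (by exact_mod_cast hCpos.ne') (ENNReal.natCast_ne_top C), mul_one]
end

section
/- Let x*_1 ≤ … ≤ x*_n be the sorted elements of a multiset X of size n, and let y*_1 ≤ … ≤ y*_s be the sorted elements of a uniformly random s-element subset S of X. Suppose parameters satisfy −g < κs ≤ s + g, 1 ≤ s ≤ n, g ≥ 0, and let ī := max{1, min(⌈κs⌉, s)} and j̄_l := max{⌈κn − gn/s⌉, 1}. If ī ≥ ⌈κs⌉, then P[y*_ī < x*_{j̄_l}] ≤ exp(−2g²/s). -/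
open MeasureTheory
open scoped ENNReal

/-- The `i`-th smallest (1-indexed) element of a multiset of reals. -/
noncomputable def kthSmallest (m : Multiset ℝ) (i : ℕ) : ℝ :=
  (m.sort (· ≤ ·)).getD (i - 1) 0

section helpers
open Finset Nat

lemma bernoulli_mgf (p θ : ℝ) (hp0 : 0 ≤ p) (hp1 : p ≤ 1) (hθ : 0 ≤ θ) :
    1 + p * (Real.exp θ - 1) ≤ Real.exp (p * θ + θ ^ 2 / 8) := by
  have hD : ∀ t : ℝ, 0 < 1 - p + p * Real.exp t := by
    intro t
    rcases eq_or_lt_of_le hp0 with h | h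
    · simp [← h]
    · have := Real.exp_pos t
      nlinarith
  set f : ℝ → ℝ := fun t => p * t + t ^ 2 / 8 - Real.log (1 - p + p * Real.exp t) with hf
  set f' : ℝ → ℝ := fun t => p + t / 4 - p * Real.exp t / (1 - p + p * Real.exp t) with hf'
  have hDd : ∀ t : ℝ, HasDerivAt (fun u => 1 - p + p * Real.exp u) (p * Real.exp t) t := by
    intro t
    exact ((Real.hasDerivAt_exp t).const_mul p).const_add (1 - p)
  have hfd : ∀ t : ℝ, HasDerivAt f (f' t) t := by
    intro t
    have h1 : HasDerivAt (fun u : ℝ => p * u + u ^ 2 / 8) (p + 2 * t / 8) t := by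
      have := ((hasDerivAt_id t).const_mul p).add
        (((hasDerivAt_id t).pow 2).div_const 8)
      simpa [Pi.add_def] using this
    have h2 : HasDerivAt (fun u => Real.log (1 - p + p * Real.exp u))
        (p * Real.exp t / (1 - p + p * Real.exp t)) t :=
      (hDd t).log (ne_of_gt (hD t))
    have := h1.sub h2
    convert this using 1
    · rfl
    · rfl
    · rfl
    · simp only [hf']
      ring
  have hf'd : ∀ t : ℝ, HasDerivAt f'
      (1 / 4 - (p * Real.exp t * (1 - p + p * Real.exp t) -
        p * Real.exp t * (p * Real.exp t)) / (1 - p + p * Real.exp t) ^ 2) t := by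
    intro t
    have h1 : HasDerivAt (fun u : ℝ => p + u / 4) (1 / 4) t := by
      simpa using ((hasDerivAt_id t).div_const 4).const_add p
    have h2 : HasDerivAt (fun u => p * Real.exp u / (1 - p + p * Real.exp u))
        ((p * Real.exp t * (1 - p + p * Real.exp t) -
          p * Real.exp t * (p * Real.exp t)) / (1 - p + p * Real.exp t) ^ 2) t :=
      ((Real.hasDerivAt_exp t).const_mul p).div (hDd t) (ne_of_gt (hD t))
    exact h1.sub h2
  have hf'mono : Monotone f' := by
    apply monotone_of_deriv_nonneg
    · exact fun t => (hf'd t).differentiableAt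
    · intro t
      rw [(hf'd t).deriv]
      set E := Real.exp t with hE
      have hEpos : 0 < E := Real.exp_pos t
      have hDt := hD t
      rw [sub_nonneg, div_le_iff₀ (by positivity)]
      nlinarith [sq_nonneg (p * E - (1 - p))]
  have hf'0 : f' 0 = 0 := by
    simp [hf']
  have hf'nonneg : ∀ t : ℝ, 0 ≤ t → 0 ≤ f' t := by
    intro t ht
    rw [← hf'0]
    exact hf'mono ht
  have hfmono : MonotoneOn f (Set.Ici 0) := by
    apply monotoneOn_of_deriv_nonneg (convex_Ici 0)
    · exact fun t _ => (hfd t).differentiableAt.continuousAt.continuousWithinAt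
    · exact fun t _ => (hfd t).differentiableAt.differentiableWithinAt
    · intro t ht
      rw [(hfd t).deriv]
      rw [interior_Ici] at ht
      exact hf'nonneg t (le_of_lt ht)
  have hf0 : f 0 = 0 := by simp [hf]
  have : 0 ≤ f θ := by
    rw [← hf0]
    exact hfmono (Set.self_mem_Ici) hθ hθ
  have hlog : Real.log (1 - p + p * Real.exp θ) ≤ p * θ + θ ^ 2 / 8 := by
    simp only [hf] at this; linarith
  calc 1 + p * (Real.exp θ - 1) = 1 - p + p * Real.exp θ := by ring
    _ = Real.exp (Real.log (1 - p + p * Real.exp θ)) := (Real.exp_log (hD θ)).symm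
    _ ≤ Real.exp (p * θ + θ ^ 2 / 8) := Real.exp_le_exp.2 hlog


lemma desc_bound (c n : ℕ) (h : c ≤ n) (j : ℕ) :
    c.descFactorial j * n ^ j ≤ n.descFactorial j * c ^ j := by
  induction j with
  | zero => simp
  | succ j ih =>
    rw [Nat.descFactorial_succ, Nat.descFactorial_succ, pow_succ, pow_succ]
    have h1 : (c - j) * n ≤ (n - j) * c := by
      have h2 : j * c ≤ j * n := Nat.mul_le_mul_left j h
      calc (c - j) * n = c * n - j * n := Nat.sub_mul _ _ _
        _ ≤ c * n - j * c := Nat.sub_le_sub_left h2 _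
        _ = n * c - j * c := by rw [Nat.mul_comm]
        _ = (n - j) * c := (Nat.sub_mul _ _ _).symm
    calc (c - j) * c.descFactorial j * (n ^ j * n)
        = ((c - j) * n) * (c.descFactorial j * n ^ j) := by ring
      _ ≤ ((n - j) * c) * (n.descFactorial j * c ^ j) := Nat.mul_le_mul h1 ih
      _ = (n - j) * n.descFactorial j * (c ^ j * c) := by ring

lemma choose_bound (c n : ℕ) (h : c ≤ n) (j : ℕ) :
    c.choose j * n ^ j ≤ n.choose j * c ^ j := by
  have hd := desc_bound c n h j
  rw [Nat.descFactorial_eq_factorial_mul_choose, Nat.descFactorial_eq_factorial_mul_choose] at hd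
  have hp := Nat.factorial_pos j
  have h2 : j ! * (c.choose j * n ^ j) ≤ j ! * (n.choose j * c ^ j) := by
    calc j ! * (c.choose j * n ^ j) = j ! * c.choose j * n ^ j := by ring
      _ ≤ j ! * n.choose j * c ^ j := hd
      _ = j ! * (n.choose j * c ^ j) := by ring
  exact Nat.le_of_mul_le_mul_left h2 hp

lemma chv_id (n c s j : ℕ) (hc : c ≤ n) (hj : j ≤ s) :
    ∑ k ∈ Finset.range (s + 1), c.choose k * (n - c).choose (s - k) * k.choose j
      = c.choose j * (n - j).choose (s - j) := by
  rcases lt_or_ge c j with hjc | hjc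
  · rw [Nat.choose_eq_zero_of_lt hjc, Nat.zero_mul]
    apply Finset.sum_eq_zero
    intro k _
    rcases lt_or_ge k j with hkj | hkj
    · rw [Nat.choose_eq_zero_of_lt hkj, Nat.mul_zero]
    · rw [Nat.choose_eq_zero_of_lt (lt_of_lt_of_le hjc hkj), Nat.zero_mul, Nat.zero_mul]
  · have key : ∀ k, j ≤ k → c.choose k * k.choose j = c.choose j * (c - j).choose (k - j) := by
      intro k hk
      rcases le_or_gt k c with hkc | hkc
      · exact Nat.choose_mul hk
      · rw [Nat.choose_eq_zero_of_lt hkc, Nat.zero_mul,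
          Nat.choose_eq_zero_of_lt (show c - j < k - j by omega), Nat.mul_zero]
    have hsub : Finset.Ico j (s + 1) ⊆ Finset.range (s + 1) := by
      intro k hk; simp only [Finset.mem_Ico, Finset.mem_range] at *; omega
    rw [← Finset.sum_subset hsub (by
      intro k hk hk2
      simp only [Finset.mem_Ico, Finset.mem_range] at hk hk2
      have : k < j := by omega
      rw [Nat.choose_eq_zero_of_lt this, Nat.mul_zero])]
    have step : ∀ k ∈ Finset.Ico j (s + 1),
        c.choose k * (n - c).choose (s - k) * k.choose j
          = c.choose j * ((c - j).choose (k - j) * (n - c).choose (s - k)) := by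
      intro k hk
      simp only [Finset.mem_Ico] at hk
      calc c.choose k * (n - c).choose (s - k) * k.choose j
          = c.choose k * k.choose j * (n - c).choose (s - k) := by ring
        _ = c.choose j * (c - j).choose (k - j) * (n - c).choose (s - k) := by
            rw [key k hk.1]
        _ = _ := by ring
    rw [Finset.sum_congr rfl step, ← Finset.mul_sum]
    congr 1
    rw [Finset.sum_Ico_eq_sum_range]
    have hlen : s + 1 - j = (s - j) + 1 := by omega
    rw [hlen]
    have : ∀ a ∈ Finset.range ((s - j) + 1),
        (c - j).choose (j + a - j) * (n - c).choose (s - (j + a))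
          = (c - j).choose a * (n - c).choose ((s - j) - a) := by
      intro a ha
      congr 2 <;> omega
    rw [Finset.sum_congr rfl this]
    have hnj : n - j = (c - j) + (n - c) := by omega
    rw [hnj, Nat.add_choose_eq]
    rw [Finset.Nat.sum_antidiagonal_eq_sum_range_succ_mk]

lemma chv_mgf (n c s : ℕ) (hc : c ≤ n) (hs : s ≤ n) (hn : 0 < n)
    (lam : ℝ) (hlam : 1 ≤ lam) :
    ∑ k ∈ Finset.range (s + 1), (c.choose k * (n - c).choose (s - k) : ℝ) * lam ^ k
      ≤ (n.choose s : ℝ) * (1 + ((c : ℝ) / n) * (lam - 1)) ^ s := by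
  have hnR : (0 : ℝ) < n := by exact_mod_cast hn
  have hlam1 : (0 : ℝ) ≤ lam - 1 := by linarith
  -- expand lam ^ k
  have hexp : ∀ k ∈ Finset.range (s + 1), (lam : ℝ) ^ k =
      ∑ j ∈ Finset.range (s + 1), (lam - 1) ^ j * (k.choose j : ℝ) := by
    intro k hk
    simp only [Finset.mem_range] at hk
    have h1 : lam = (lam - 1) + 1 := by ring
    rw [h1, add_pow]
    simp only [one_pow, mul_one, add_sub_cancel_right]
    apply Finset.sum_subset
    · intro j hj; simp only [Finset.mem_range] at *; omega
    · intro j hj hj2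
      simp only [Finset.mem_range] at hj hj2
      rw [Nat.choose_eq_zero_of_lt (by omega)]
      simp
  calc ∑ k ∈ Finset.range (s + 1), (c.choose k * (n - c).choose (s - k) : ℝ) * lam ^ k
      = ∑ k ∈ Finset.range (s + 1), ∑ j ∈ Finset.range (s + 1),
          (lam - 1) ^ j * ((c.choose k * (n - c).choose (s - k) * k.choose j : ℕ) : ℝ) := by
        apply Finset.sum_congr rfl
        intro k hk
        rw [hexp k hk, Finset.mul_sum]
        apply Finset.sum_congr rfl
        intro j _
        push_cast
        ring
    _ = ∑ j ∈ Finset.range (s + 1),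
          (lam - 1) ^ j * ((c.choose j * (n - j).choose (s - j) : ℕ) : ℝ) := by
        rw [Finset.sum_comm]
        apply Finset.sum_congr rfl
        intro j hj
        simp only [Finset.mem_range] at hj
        rw [← Finset.mul_sum, ← Nat.cast_sum, chv_id n c s j hc (by omega)]
    _ ≤ ∑ j ∈ Finset.range (s + 1),
          (n.choose s : ℝ) * (s.choose j : ℝ) * (((c : ℝ) / n) * (lam - 1)) ^ j := by
        apply Finset.sum_le_sum
        intro j hj
        simp only [Finset.mem_range] at hj
        have hcb : (c.choose j : ℝ) ≤ (n.choose j : ℝ) * ((c : ℝ) / n) ^ j := by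
          have := choose_bound c n hc j
          have hcast : (c.choose j : ℝ) * (n : ℝ) ^ j ≤ (n.choose j : ℝ) * (c : ℝ) ^ j := by
            exact_mod_cast this
          rw [div_pow, ← mul_div_assoc, le_div_iff₀ (by positivity)]
          linarith
        have hmul : (n.choose j : ℝ) * ((n - j).choose (s - j) : ℝ)
            = (n.choose s : ℝ) * (s.choose j : ℝ) := by
          rw [← Nat.cast_mul, ← Nat.cast_mul, Nat.choose_mul (n := n) (by omega : j ≤ s)]
        have h1 : ((c.choose j * (n - j).choose (s - j) : ℕ) : ℝ)
            ≤ (n.choose s : ℝ) * (s.choose j : ℝ) * ((c : ℝ) / n) ^ j := by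
          push_cast
          calc (c.choose j : ℝ) * ((n - j).choose (s - j) : ℝ)
              ≤ (n.choose j : ℝ) * ((c : ℝ) / n) ^ j * ((n - j).choose (s - j) : ℝ) := by
                apply mul_le_mul_of_nonneg_right hcb (by positivity)
            _ = (n.choose j : ℝ) * ((n - j).choose (s - j) : ℝ) * ((c : ℝ) / n) ^ j := by ring
            _ = (n.choose s : ℝ) * (s.choose j : ℝ) * ((c : ℝ) / n) ^ j := by rw [hmul]
        calc (lam - 1) ^ j * ((c.choose j * (n - j).choose (s - j) : ℕ) : ℝ)
            ≤ (lam - 1) ^ j * ((n.choose s : ℝ) * (s.choose j : ℝ) * ((c : ℝ) / n) ^ j) :=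
              mul_le_mul_of_nonneg_left h1 (by positivity)
          _ = (n.choose s : ℝ) * (s.choose j : ℝ) * (((c : ℝ) / n) * (lam - 1)) ^ j := by
              rw [mul_pow]; ring
    _ = (n.choose s : ℝ) * (1 + ((c : ℝ) / n) * (lam - 1)) ^ s := by
        simp only [mul_assoc]
        rw [← Finset.mul_sum]
        congr 1
        rw [add_comm (1 : ℝ), add_pow]
        apply Finset.sum_congr rfl
        intro j _
        simp only [one_pow, mul_one]
        ring

lemma hyp_tail (n c s t : ℕ) (hc : c ≤ n) (hs1 : 1 ≤ s) (hsn : s ≤ n)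
    (g : ℝ) (hg : 0 ≤ g) (ht : (c : ℝ) / n * s + g ≤ t) :
    ∑ k ∈ Finset.Ico t (s + 1), ((c.choose k * (n - c).choose (s - k) : ℕ) : ℝ)
      ≤ (n.choose s : ℝ) * Real.exp (-2 * g ^ 2 / s) := by
  have hn : 0 < n := lt_of_lt_of_le hs1 hsn
  have hsR : (0 : ℝ) < s := by exact_mod_cast hs1
  have hnR : (0 : ℝ) < n := by exact_mod_cast hn
  set p : ℝ := (c : ℝ) / n with hp
  have hp0 : 0 ≤ p := by positivity
  have hp1 : p ≤ 1 := by
    rw [hp, div_le_one hnR]; exact_mod_cast hc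
  set θ : ℝ := 4 * g / s with hθdef
  have hθ0 : 0 ≤ θ := by positivity
  set lam : ℝ := Real.exp θ with hlamdef
  have hlam1 : 1 ≤ lam := Real.one_le_exp hθ0
  have hlamp : 0 < lam := Real.exp_pos θ
  -- step 1 : tail ≤ lam^(-t) * mgf
  have step1 : ∑ k ∈ Finset.Ico t (s + 1), ((c.choose k * (n - c).choose (s - k) : ℕ) : ℝ)
      ≤ (∑ k ∈ Finset.range (s + 1),
          ((c.choose k * (n - c).choose (s - k) : ℕ) : ℝ) * lam ^ k) / lam ^ t := by
    rw [le_div_iff₀ (by positivity), Finset.sum_mul]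
    have h1 : ∀ k ∈ Finset.Ico t (s + 1),
        ((c.choose k * (n - c).choose (s - k) : ℕ) : ℝ) * lam ^ t
          ≤ ((c.choose k * (n - c).choose (s - k) : ℕ) : ℝ) * lam ^ k := by
      intro k hk
      simp only [Finset.mem_Ico] at hk
      apply mul_le_mul_of_nonneg_left (pow_le_pow_right₀ hlam1 hk.1) (by positivity)
    calc ∑ k ∈ Finset.Ico t (s + 1), ((c.choose k * (n - c).choose (s - k) : ℕ) : ℝ) * lam ^ t
        ≤ ∑ k ∈ Finset.Ico t (s + 1), ((c.choose k * (n - c).choose (s - k) : ℕ) : ℝ) * lam ^ k :=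
          Finset.sum_le_sum h1
      _ ≤ ∑ k ∈ Finset.range (s + 1), ((c.choose k * (n - c).choose (s - k) : ℕ) : ℝ) * lam ^ k := by
          apply Finset.sum_le_sum_of_subset_of_nonneg
          · intro k hk; simp only [Finset.mem_Ico, Finset.mem_range] at *; omega
          · intro k _ _; positivity
  have step2 : (∑ k ∈ Finset.range (s + 1),
      ((c.choose k * (n - c).choose (s - k) : ℕ) : ℝ) * lam ^ k) / lam ^ t
      ≤ (n.choose s : ℝ) * (1 + p * (lam - 1)) ^ s / lam ^ t := by
    gcongr
    have h := chv_mgf n c s hc hsn hn lam hlam1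
    push_cast at h ⊢
    exact h
  have hbase : 1 + p * (lam - 1) ≤ Real.exp (p * θ + θ ^ 2 / 8) :=
    bernoulli_mgf p θ hp0 hp1 hθ0
  have hbase0 : (0 : ℝ) ≤ 1 + p * (lam - 1) := by nlinarith
  have step3 : (1 + p * (lam - 1)) ^ s ≤ Real.exp (s * (p * θ + θ ^ 2 / 8)) := by
    calc (1 + p * (lam - 1)) ^ s ≤ (Real.exp (p * θ + θ ^ 2 / 8)) ^ s :=
          pow_le_pow_left₀ hbase0 hbase s
      _ = Real.exp (s * (p * θ + θ ^ 2 / 8)) := (Real.exp_nat_mul _ s).symm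
  have hlamt : lam ^ t = Real.exp (t * θ) := (Real.exp_nat_mul _ t).symm
  have hexpo : (s : ℝ) * (p * θ + θ ^ 2 / 8) - t * θ ≤ -2 * g ^ 2 / s := by
    have htθ : (p * s + g) * θ ≤ (t : ℝ) * θ :=
      mul_le_mul_of_nonneg_right (by linarith [ht]) hθ0
    have key : (s : ℝ) * (p * θ + θ ^ 2 / 8) - (p * s + g) * θ = -2 * g ^ 2 / s := by
      rw [hθdef]; field_simp; ring
    linarith
  have step4 : (n.choose s : ℝ) * (1 + p * (lam - 1)) ^ s / lam ^ t
      ≤ (n.choose s : ℝ) * Real.exp (-2 * g ^ 2 / s) := by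
    rw [hlamt]
    calc (n.choose s : ℝ) * (1 + p * (lam - 1)) ^ s / Real.exp (t * θ)
        ≤ (n.choose s : ℝ) * Real.exp (s * (p * θ + θ ^ 2 / 8)) / Real.exp (t * θ) := by
          gcongr
      _ = (n.choose s : ℝ) * Real.exp (s * (p * θ + θ ^ 2 / 8) - t * θ) := by
          rw [mul_div_assoc, Real.exp_sub]
      _ ≤ (n.choose s : ℝ) * Real.exp (-2 * g ^ 2 / s) := by
          gcongr
  linarith [step1, step2, step4]

lemma count_bad (n s t : ℕ) (A : Finset (Fin n)) :
    ((Finset.univ : Finset (Finset (Fin n))).filter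
        (fun B => B.card = s ∧ t ≤ (B ∩ A).card)).card
      ≤ ∑ k ∈ Finset.Ico t (s + 1), A.card.choose k * (Aᶜ.card).choose (s - k) := by
  classical
  set bad := (Finset.univ : Finset (Finset (Fin n))).filter
      (fun B => B.card = s ∧ t ≤ (B ∩ A).card) with hbad
  have hsub : bad ⊆ (Finset.Ico t (s + 1)).biUnion
      (fun k => ((A.powersetCard k) ×ˢ (Aᶜ.powersetCard (s - k))).image
        (fun q => q.1 ∪ q.2)) := by
    intro B hB
    simp only [hbad, Finset.mem_filter, Finset.mem_univ, true_and] at hB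
    obtain ⟨hcard, hT⟩ := hB
    rw [Finset.mem_biUnion]
    refine ⟨(B ∩ A).card, ?_, ?_⟩
    · rw [Finset.mem_Ico]
      refine ⟨hT, ?_⟩
      have : (B ∩ A).card ≤ B.card := Finset.card_le_card Finset.inter_subset_left
      omega
    · rw [Finset.mem_image]
      refine ⟨(B ∩ A, B \ A), ?_, ?_⟩
      · rw [Finset.mem_product]
        constructor
        · rw [Finset.mem_powersetCard]
          exact ⟨Finset.inter_subset_right, rfl⟩
        · rw [Finset.mem_powersetCard]
          constructor
          · intro i hi
            simp only [Finset.mem_sdiff] at hi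
            simp [hi.2]
          · have : B \ A = B \ (B ∩ A) := by
              ext i; simp only [Finset.mem_sdiff, Finset.mem_inter]; tauto
            rw [this, Finset.card_sdiff_of_subset Finset.inter_subset_left, hcard]
      · simp only
        ext i
        simp only [Finset.mem_union, Finset.mem_inter, Finset.mem_sdiff]
        tauto
  calc bad.card ≤ _ := Finset.card_le_card hsub
    _ ≤ ∑ k ∈ Finset.Ico t (s + 1),
        (((A.powersetCard k) ×ˢ (Aᶜ.powersetCard (s - k))).image
          (fun q : Finset (Fin n) × Finset (Fin n) => q.1 ∪ q.2)).card :=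
      Finset.card_biUnion_le
    _ ≤ ∑ k ∈ Finset.Ico t (s + 1), A.card.choose k * (Aᶜ.card).choose (s - k) := by
      apply Finset.sum_le_sum
      intro k _
      calc _ ≤ ((A.powersetCard k) ×ˢ (Aᶜ.powersetCard (s - k))).card :=
            Finset.card_image_le
        _ = A.card.choose k * (Aᶜ.card).choose (s - k) := by
            rw [Finset.card_product, Finset.card_powersetCard, Finset.card_powersetCard]


lemma sorted_count_lt {l : List ℝ} (hl : l.Pairwise (· ≤ ·)) {t : ℕ} (ht1 : 1 ≤ t)
    (ht2 : t ≤ l.length) {v : ℝ} (h : l.getD (t - 1) 0 < v) :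
    t ≤ l.countP (fun y => decide (y < v)) := by
  have hlt : t - 1 < l.length := by omega
  rw [List.getD_eq_getElem l 0 hlt] at h
  have htake : ∀ a ∈ l.take t, decide (a < v) = true := by
    intro a ha
    rw [List.mem_iff_getElem] at ha
    obtain ⟨i, hi, rfl⟩ := ha
    have hi' : i < t := by
      have := hi; rw [List.length_take] at this; omega
    have hil : i < l.length := by omega
    rw [List.getElem_take]
    have hle : l[i] ≤ l[t - 1] := by
      have := hl.rel_get_of_le (a := ⟨i, hil⟩) (b := ⟨t - 1, hlt⟩) (by simp; omega)
      simpa using this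
    simp only [decide_eq_true_eq]
    exact lt_of_le_of_lt hle h
  have hcount : (l.take t).countP (fun y => decide (y < v)) = t := by
    rw [List.countP_eq_length.2 htake, List.length_take]
    omega
  calc t = (l.take t).countP (fun y => decide (y < v)) := hcount.symm
    _ ≤ (l.take t).countP _ + (l.drop t).countP (fun y => decide (y < v)) := Nat.le_add_right _ _
    _ = l.countP (fun y => decide (y < v)) := by
        rw [← List.countP_append, List.take_append_drop]

lemma event_count (n : ℕ) (x : Fin n → ℝ) (B : Finset (Fin n)) (t : ℕ) (v : ℝ)
    (ht1 : 1 ≤ t) (ht2 : t ≤ B.card)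
    (h : kthSmallest (B.val.map x) t < v) :
    t ≤ (B.filter (fun i => x i < v)).card := by
  classical
  set m : Multiset ℝ := B.val.map x with hm
  have hsorted : (m.sort (· ≤ ·)).Pairwise (· ≤ ·) := Multiset.pairwise_sort _ _
  have hlen : (m.sort (· ≤ ·)).length = B.card := by
    rw [Multiset.length_sort, hm, Multiset.card_map]
    rfl
  have hcnt : t ≤ (m.sort (· ≤ ·)).countP (fun y => decide (y < v)) :=
    sorted_count_lt hsorted ht1 (by omega) h
  have h2 : (m.sort (· ≤ ·)).countP (fun y => decide (y < v)) = Multiset.countP (· < v) m := by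
    rw [← Multiset.coe_countP, Multiset.sort_eq]
  rw [h2, hm, Multiset.countP_map] at hcnt
  calc t ≤ Multiset.card (B.val.filter fun a => x a < v) := hcnt
    _ = (B.filter (fun i => x i < v)).card := rfl

lemma kth_full (n : ℕ) (x : Fin n → ℝ) (hx : Monotone x) (j : ℕ) (hj1 : 1 ≤ j) (hj2 : j ≤ n) :
    kthSmallest ((Finset.univ : Finset (Fin n)).val.map x) j = x ⟨j - 1, by omega⟩ := by
  classical
  have hperm : ((Finset.univ : Finset (Fin n)).val.map x) = ↑((List.finRange n).map x) := by
    rw [Fin.univ_def]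
    rfl
  have hsorted2 : ((List.finRange n).map x).Pairwise (· ≤ ·) := by
    exact List.Pairwise.map x (fun a b (hab : a < b) => hx hab.le)
      (List.pairwise_lt_finRange n)
  have hsort : (((Finset.univ : Finset (Fin n)).val.map x).sort (· ≤ ·))
      = (List.finRange n).map x := by
    apply List.Perm.eq_of_pairwise' (Multiset.pairwise_sort _ _) hsorted2
    rw [← Multiset.coe_eq_coe, Multiset.sort_eq, hperm]
  rw [kthSmallest, hsort]
  have hlen : j - 1 < ((List.finRange n).map x).length := by
    rw [List.length_map, List.length_finRange]; omega
  rw [List.getD_eq_getElem _ 0 hlen, List.getElem_map, List.getElem_finRange]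
  rfl

lemma count_lt_full (n : ℕ) (x : Fin n → ℝ) (hx : Monotone x) (i0 : Fin n) :
    (Finset.univ.filter (fun i => x i < x i0)).card ≤ (i0 : ℕ) := by
  classical
  have hsub : Finset.univ.filter (fun i => x i < x i0) ⊆ Finset.Iio i0 := by
    intro i hi
    simp only [Finset.mem_filter, Finset.mem_univ, true_and] at hi
    rw [Finset.mem_Iio]
    by_contra hle
    exact absurd (hx (not_lt.1 hle)) (not_le.2 hi)
  calc _ ≤ (Finset.Iio i0).card := Finset.card_le_card hsub
    _ = (i0 : ℕ) := Fin.card_Iio i0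

end helpers

/-- Sampling deviation lemma, part (a): with `x` the sorted input of size `n`
and `S` a uniformly random `s`-element subset of the index set, if
`ī ≥ ⌈κs⌉` then `P[y*_ī < x*_{j̄ₗ}] ≤ exp (-2g²/s)`. -/
theorem rank_lemma_a
    (n s : ℕ) (hs : 1 ≤ s) (hsn : s ≤ n)
    (κ g : ℝ) (hg : 0 ≤ g) (hκ1 : -g < κ * s) (hκ2 : κ * s ≤ s + g)
    (x : Fin n → ℝ) (hx : Monotone x)
    {Ω : Type*} [MeasurableSpace Ω] (μ : Measure Ω) [IsProbabilityMeasure μ]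
    (S : Ω → Finset (Fin n)) (hScard : ∀ ω, (S ω).card = s)
    (hunif : ∀ A : Finset (Fin n), A.card = s →
      μ {ω | S ω = A} = 1 / (n.choose s))
    (ibar : ℤ) (hibar : ibar = max 1 (min ⌈κ * s⌉ (s : ℤ)))
    (jl : ℤ) (hjl : jl = max ⌈κ * n - g * n / s⌉ 1)
    (hge : ⌈κ * s⌉ ≤ ibar) :
    μ {ω | kthSmallest ((S ω).val.map x) ibar.toNat <
           kthSmallest ((Finset.univ : Finset (Fin n)).val.map x) jl.toNat} ≤
      ENNReal.ofReal (Real.exp (-2 * g ^ 2 / s)) := by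
  classical
  have hn : 0 < n := lt_of_lt_of_le hs hsn
  have hsR : (0 : ℝ) < s := by exact_mod_cast hs
  have hnR : (0 : ℝ) < n := by exact_mod_cast hn
  set t : ℕ := ibar.toNat with htdef
  set j0 : ℕ := jl.toNat with hj0def
  have hibar1 : 1 ≤ ibar := by rw [hibar]; exact le_max_left _ _
  have hibars : ibar ≤ (s : ℤ) := by
    rw [hibar]
    have h1 : min ⌈κ * s⌉ (s : ℤ) ≤ (s : ℤ) := min_le_right _ _
    have h2 : (1 : ℤ) ≤ (s : ℤ) := by exact_mod_cast hs
    omega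
  have ht1 : 1 ≤ t := by omega
  have hts : t ≤ s := by omega
  have hjl1 : 1 ≤ jl := by rw [hjl]; exact le_max_right _ _
  have hjln : jl ≤ (n : ℤ) := by
    rw [hjl]
    apply max_le ?_ (by exact_mod_cast hn)
    rw [Int.ceil_le]
    have hmul := mul_le_mul_of_nonneg_right hκ2 (show (0 : ℝ) ≤ (n : ℝ) / s by positivity)
    have e1 : κ * s * ((n : ℝ) / s) = κ * n := by field_simp <;> ring
    have e2 : ((s : ℝ) + g) * ((n : ℝ) / s) = (n : ℝ) + g * n / s := by field_simp <;> ring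
    rw [e1, e2] at hmul
    push_cast
    linarith
  have hj01 : 1 ≤ j0 := by omega
  have hj0n : j0 ≤ n := by omega
  set v : ℝ := kthSmallest ((Finset.univ : Finset (Fin n)).val.map x) j0 with hvdef
  have hi0 : j0 - 1 < n := by omega
  have hv : v = x ⟨j0 - 1, hi0⟩ := kth_full n x hx j0 hj01 hj0n
  set A : Finset (Fin n) := Finset.univ.filter (fun i => x i < v) with hAdef
  set c : ℕ := A.card with hcdef
  have hcA : c ≤ j0 - 1 := by
    rw [hcdef, hAdef, hv]
    exact count_lt_full n x hx ⟨j0 - 1, hi0⟩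
  have hcn : c ≤ n := by
    rw [hcdef, hAdef]
    have h := Finset.card_filter_le (Finset.univ : Finset (Fin n)) (fun i => x i < v)
    simpa using h
  set bad : Finset (Finset (Fin n)) := Finset.univ.filter
      (fun B => B.card = s ∧ t ≤ (B ∩ A).card) with hbaddef
  -- the event is contained in the union of `S = B` over bad `B`
  have hEsub : {ω | kthSmallest ((S ω).val.map x) t < v} ⊆ ⋃ B ∈ bad, {ω | S ω = B} := by
    intro ω hω
    have hcount : t ≤ ((S ω).filter (fun i => x i < v)).card :=
      event_count n x (S ω) t v ht1 (by rw [hScard ω]; exact hts) hω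
    have hfe : (S ω).filter (fun i => x i < v) = S ω ∩ A := by
      ext i
      simp only [Finset.mem_filter, Finset.mem_inter, hAdef, Finset.mem_univ, true_and]
    have hmem : S ω ∈ bad := by
      rw [hbaddef, Finset.mem_filter]
      exact ⟨Finset.mem_univ _, hScard ω, by rw [← hfe]; exact hcount⟩
    exact Set.mem_biUnion hmem rfl
  -- numeric bound on the number of bad subsets
  have hCpos : 0 < n.choose s := Nat.choose_pos hsn
  have hCR : (0 : ℝ) < (n.choose s : ℝ) := by exact_mod_cast hCpos
  have hkey : (bad.card : ℝ) ≤ (n.choose s : ℝ) * Real.exp (-2 * g ^ 2 / s) := by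
    have hcb := count_bad n s t A
    have hAc : Aᶜ.card = n - c := by
      rw [Finset.card_compl, Fintype.card_fin, hcdef]
    rw [hAc, ← hcdef] at hcb
    have hcbR : (bad.card : ℝ)
        ≤ ∑ k ∈ Finset.Ico t (s + 1), ((c.choose k * (n - c).choose (s - k) : ℕ) : ℝ) := by
      rw [← Nat.cast_sum]
      exact_mod_cast hcb
    by_cases hc0 : c = 0
    · have hz : ∑ k ∈ Finset.Ico t (s + 1), ((c.choose k * (n - c).choose (s - k) : ℕ) : ℝ) = 0 := by
        apply Finset.sum_eq_zero
        intro k hk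
        simp only [Finset.mem_Ico] at hk
        rw [hc0, Nat.choose_eq_zero_of_lt (by omega)]
        simp
      rw [hz] at hcbR
      have : (0 : ℝ) ≤ (n.choose s : ℝ) * Real.exp (-2 * g ^ 2 / s) := by positivity
      linarith
    · -- c ≥ 1 : derive the rank inequality and apply the tail bound
      have hc1 : 1 ≤ c := by omega
      have hj02 : 2 ≤ j0 := by omega
      have hjl2 : 2 ≤ jl := by omega
      have hjleq : jl = ⌈κ * n - g * n / s⌉ := by
        rw [hjl]
        rcases max_cases ⌈κ * n - g * n / s⌉ (1 : ℤ) with ⟨h1, _⟩ | ⟨h1, h2⟩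
        · exact h1
        · rw [hjl, h1] at hjl2; omega
      have hjlR : (jl : ℝ) < κ * n - g * n / s + 1 := by
        rw [hjleq]
        exact Int.ceil_lt_add_one _
      have hcjl : (c : ℤ) ≤ jl - 1 := by omega
      have hcjlR : (c : ℝ) ≤ (jl : ℝ) - 1 := by exact_mod_cast hcjl
      have hclt : (c : ℝ) < κ * n - g * n / s := by linarith
      have he : (κ * n - g * n / s) / n * s = κ * s - g := by field_simp
      have htR : ((⌈κ * s⌉ : ℤ) : ℝ) ≤ (t : ℝ) := by
        have h0 : ((⌈κ * s⌉ : ℤ) : ℝ) ≤ (ibar : ℝ) := by exact_mod_cast hge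
        have h2 : ((t : ℕ) : ℤ) = ibar := by
          rw [htdef]; exact Int.toNat_of_nonneg (by omega)
        have h2R : ((t : ℕ) : ℝ) = (ibar : ℝ) := by exact_mod_cast h2
        linarith
      have ht' : (c : ℝ) / n * s + g ≤ t := by
        have h1 : (c : ℝ) / n * s ≤ (κ * n - g * n / s) / n * s := by
          gcongr
        rw [he] at h1
        have h2 : κ * s ≤ ((⌈κ * s⌉ : ℤ) : ℝ) := Int.le_ceil _
        linarith
      calc (bad.card : ℝ)
          ≤ ∑ k ∈ Finset.Ico t (s + 1), ((c.choose k * (n - c).choose (s - k) : ℕ) : ℝ) := hcbR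
        _ ≤ (n.choose s : ℝ) * Real.exp (-2 * g ^ 2 / s) :=
            hyp_tail n c s t hcn hs hsn g hg ht'
  -- put it together in ℝ≥0∞
  calc μ {ω | kthSmallest ((S ω).val.map x) t < v}
      ≤ μ (⋃ B ∈ bad, {ω | S ω = B}) := measure_mono hEsub
    _ ≤ ∑ B ∈ bad, μ {ω | S ω = B} := measure_biUnion_finset_le _ _
    _ = ∑ B ∈ bad, 1 / ((n.choose s : ℕ) : ℝ≥0∞) := by
        apply Finset.sum_congr rfl
        intro B hB
        rw [hbaddef, Finset.mem_filter] at hB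
        exact hunif B hB.2.1
    _ = (bad.card : ℝ≥0∞) * (1 / ((n.choose s : ℕ) : ℝ≥0∞)) := by
        rw [Finset.sum_const, nsmul_eq_mul]
    _ ≤ ENNReal.ofReal (Real.exp (-2 * g ^ 2 / s)) := by
        rw [one_div, ← ENNReal.ofReal_natCast bad.card, ← ENNReal.ofReal_natCast (n.choose s),
          ← ENNReal.ofReal_inv_of_pos hCR, ← ENNReal.ofReal_mul (by positivity)]
        apply ENNReal.ofReal_le_ofReal
        rw [← div_eq_mul_inv, div_le_iff₀ hCR]
        linarith [hkey]
end

section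
/- With the pivot v := y*_{i_v} chosen as the i_v-th smallest of a uniformly random s-element sample from X, where i_v = ⌈ks/n + g⌉ and k < n/2 (and assuming 1 ≤ i_v ≤ s), the probability that v < x*_k is at most exp(−2g²/s). -/
open MeasureTheory

open Real Finset ENNReal
open scoped ENNReal

/-- Hoeffding's lemma for a Bernoulli variable. -/
lemma bern_mgf (p : ℝ) (hp0 : 0 ≤ p) (hp1 : p ≤ 1) (u : ℝ) (hu : 0 ≤ u) :
    1 - p + p * Real.exp u ≤ Real.exp (p * u + u ^ 2 / 8) := by
  set φ : ℝ → ℝ := fun t => 1 - p + p * Real.exp t with hφdef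
  have hφpos : ∀ t, 0 < φ t := by
    intro t
    rcases lt_or_eq_of_le hp1 with h | h
    · have h1 : 0 < 1 - p := by linarith
      have h2 : 0 ≤ p * Real.exp t := mul_nonneg hp0 (Real.exp_pos t).le
      simp only [hφdef]; linarith
    · subst h
      simp only [hφdef]
      simpa using Real.exp_pos t
  have hφ : ∀ t, HasDerivAt φ (p * Real.exp t) t := by
    intro t
    exact ((Real.hasDerivAt_exp t).const_mul p).const_add (1 - p)
  set G' : ℝ → ℝ := fun t => p + t / 4 - p * Real.exp t / φ t with hG'def
  set G : ℝ → ℝ := fun t => p * t + t ^ 2 / 8 - Real.log (φ t) with hGdef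
  have hG : ∀ t, HasDerivAt G (G' t) t := by
    intro t
    have h2 := (hasDerivAt_id t).const_mul p
    have h1 : HasDerivAt (fun t : ℝ => p * t + t ^ 2 / 8) (p + 2 * t / 8) t := by
      have := (h2.add ((hasDerivAt_pow 2 t).div_const 8)); simp at this; exact this
    have h3 : HasDerivAt (fun t => Real.log (φ t)) (p * Real.exp t / φ t) t :=
      (hφ t).log (hφpos t).ne'
    have h4 := h1.sub h3
    refine h4.congr_deriv ?_
    show _ = p + t / 4 - p * Real.exp t / φ t; ring
  have hG'' : ∀ t, HasDerivAt G' (1 / 4 - p * Real.exp t * (1 - p) / (φ t) ^ 2) t := by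
    intro t
    have h1 : HasDerivAt (fun t : ℝ => p + t / 4) (1 / 4) t := by
      simpa using ((hasDerivAt_id t).div_const 4).const_add p
    have h2 : HasDerivAt (fun t => p * Real.exp t / φ t)
        ((p * Real.exp t * φ t - p * Real.exp t * (p * Real.exp t)) / (φ t) ^ 2) t :=
      ((Real.hasDerivAt_exp t).const_mul p).div (hφ t) (hφpos t).ne'
    have hnum : p * Real.exp t * φ t - p * Real.exp t * (p * Real.exp t)
        = p * Real.exp t * (1 - p) := by
      simp only [hφdef]; ring
    rw [hnum] at h2
    exact h1.sub h2
  have hG''nonneg : ∀ t, 0 ≤ 1 / 4 - p * Real.exp t * (1 - p) / (φ t) ^ 2 := by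
    intro t
    have h : (φ t) = 1 - p + p * Real.exp t := rfl
    rw [sub_nonneg, div_le_iff₀ (pow_pos (hφpos t) 2), h]
    nlinarith [sq_nonneg ((1 - p) - p * Real.exp t)]
  have hmonoG' : Monotone G' := by
    apply monotone_of_deriv_nonneg
    · exact fun t => (hG'' t).differentiableAt
    · intro t
      rw [(hG'' t).deriv]
      exact hG''nonneg t
  have hG'0 : G' 0 = 0 := by
    simp [hG'def, hφdef]
  have hG'nonneg : ∀ t, 0 ≤ t → 0 ≤ G' t := by
    intro t ht
    rw [← hG'0]
    exact hmonoG' ht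
  have hdiffG : Differentiable ℝ G := fun t => (hG t).differentiableAt
  have hmonoG : MonotoneOn G (Set.Ici 0) := by
    apply monotoneOn_of_deriv_nonneg (convex_Ici 0) hdiffG.continuous.continuousOn
    · intro t _
      exact (hdiffG t).differentiableWithinAt
    · intro t ht
      rw [(hG t).deriv]
      rw [interior_Ici] at ht
      exact hG'nonneg t (le_of_lt ht)
  have hG0 : G 0 = 0 := by
    simp [hGdef, hφdef]
  have hGu : 0 ≤ G u := by
    rw [← hG0]
    exact hmonoG (by simp) (by simpa using hu) hu
  have hlog : Real.log (φ u) ≤ p * u + u ^ 2 / 8 := by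
    simp only [hGdef] at hGu; linarith
  calc φ u ≤ Real.exp (p * u + u ^ 2 / 8) := by
        rw [← Real.exp_log (hφpos u)]
        exact Real.exp_le_exp.mpr hlog

lemma twopoint (p c lam : ℝ) (hp0 : 0 ≤ p) (hp1 : p ≤ 1) (hc0 : 0 ≤ c) (hc1 : c ≤ 1)
    (hlam : 0 ≤ lam) :
    p * Real.exp (lam * ((1 - p) * c)) + (1 - p) * Real.exp (-(lam * (p * c)))
      ≤ Real.exp (lam ^ 2 / 8) := by
  have hu0 : 0 ≤ lam * c := mul_nonneg hlam hc0
  have hul : lam * c ≤ lam := by nlinarith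
  have h1 : p * Real.exp (lam * ((1 - p) * c)) + (1 - p) * Real.exp (-(lam * (p * c)))
      = Real.exp (-(p * (lam * c))) * (1 - p + p * Real.exp (lam * c)) := by
    rw [show lam * ((1 - p) * c) = -(p * (lam * c)) + lam * c by ring, Real.exp_add]
    rw [show -(lam * (p * c)) = -(p * (lam * c)) by ring]
    ring
  rw [h1]
  calc Real.exp (-(p * (lam * c))) * (1 - p + p * Real.exp (lam * c))
      ≤ Real.exp (-(p * (lam * c))) * Real.exp (p * (lam * c) + (lam * c) ^ 2 / 8) :=
        mul_le_mul_of_nonneg_left (bern_mgf p hp0 hp1 (lam * c) hu0) (Real.exp_pos _).le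
    _ = Real.exp ((lam * c) ^ 2 / 8) := by rw [← Real.exp_add]; ring_nf
    _ ≤ Real.exp (lam ^ 2 / 8) := by
        apply Real.exp_le_exp.mpr
        nlinarith

lemma core (mr br sr lam : ℝ) (hm : 0 ≤ mr) (hb : 0 ≤ br) (hs : 0 ≤ sr)
    (hsn : sr ≤ mr + 1 + br) (hlam : 0 ≤ lam) :
    (mr + 1) * Real.exp lam * Real.exp (lam * mr * sr / (mr + 1 + br) + sr * lam ^ 2 / 8)
      + (br + 1) * Real.exp (lam * (mr + 1) * sr / (mr + 1 + br) + sr * lam ^ 2 / 8)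
    ≤ (mr + 1 + br + 1) *
        Real.exp (lam * (mr + 1) * (sr + 1) / (mr + 1 + br + 1) + (sr + 1) * lam ^ 2 / 8) := by
  obtain ⟨nr, hnr⟩ : ∃ x : ℝ, x = mr + 1 + br := ⟨_, rfl⟩
  rw [← hnr]
  have hnr0 : 0 < nr := by rw [hnr]; linarith
  have hN0 : (0:ℝ) < nr + 1 := by linarith
  obtain ⟨p, hp⟩ : ∃ x : ℝ, x = (mr + 1) / (nr + 1) := ⟨_, rfl⟩
  obtain ⟨c, hc⟩ : ∃ x : ℝ, x = 1 - sr / nr := ⟨_, rfl⟩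
  have hp0 : 0 ≤ p := by rw [hp]; positivity
  have hp1 : p ≤ 1 := by rw [hp, div_le_one hN0, hnr]; linarith
  have hc0 : 0 ≤ c := by rw [hc, sub_nonneg, div_le_one hnr0, hnr]; linarith
  have hc1 : c ≤ 1 := by
    have h : 0 ≤ sr / nr := by positivity
    rw [hc]; linarith
  have TP := twopoint p c lam hp0 hp1 hc0 hc1 hlam
  have e4 : (nr + 1) * p = mr + 1 := by rw [hp]; field_simp
  have e5 : (nr + 1) * (1 - p) = br + 1 := by rw [hp, hnr]; field_simp; ring
  have e1 : lam * ((1 - p) * c) + (lam * (mr + 1) * (sr + 1) / (nr + 1) + sr * lam ^ 2 / 8)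
      = lam + (lam * mr * sr / nr + sr * lam ^ 2 / 8) := by
    rw [hp, hc]; field_simp; ring
  have e2 : -(lam * (p * c)) + (lam * (mr + 1) * (sr + 1) / (nr + 1) + sr * lam ^ 2 / 8)
      = lam * (mr + 1) * sr / nr + sr * lam ^ 2 / 8 := by
    rw [hp, hc]; field_simp; ring
  have E1 : Real.exp (lam * ((1 - p) * c)) *
        Real.exp (lam * (mr + 1) * (sr + 1) / (nr + 1) + sr * lam ^ 2 / 8)
      = Real.exp lam * Real.exp (lam * mr * sr / nr + sr * lam ^ 2 / 8) := by
    rw [← Real.exp_add, ← Real.exp_add, e1]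
  have E2 : Real.exp (-(lam * (p * c))) *
        Real.exp (lam * (mr + 1) * (sr + 1) / (nr + 1) + sr * lam ^ 2 / 8)
      = Real.exp (lam * (mr + 1) * sr / nr + sr * lam ^ 2 / 8) := by
    rw [← Real.exp_add, e2]
  have lhs_eq : (mr + 1) * Real.exp lam * Real.exp (lam * mr * sr / nr + sr * lam ^ 2 / 8)
      + (br + 1) * Real.exp (lam * (mr + 1) * sr / nr + sr * lam ^ 2 / 8)
      = (nr + 1) * Real.exp (lam * (mr + 1) * (sr + 1) / (nr + 1) + sr * lam ^ 2 / 8) *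
          (p * Real.exp (lam * ((1 - p) * c)) + (1 - p) * Real.exp (-(lam * (p * c)))) := by
    linear_combination (-(Real.exp lam * Real.exp (lam * mr * sr / nr + sr * lam ^ 2 / 8))) * e4
      - Real.exp (lam * (mr + 1) * sr / nr + sr * lam ^ 2 / 8) * e5
      - ((nr + 1) * p) * E1 - ((nr + 1) * (1 - p)) * E2
  have rhs_eq : (nr + 1) * Real.exp (lam * (mr + 1) * (sr + 1) / (nr + 1) + sr * lam ^ 2 / 8) *
        Real.exp (lam ^ 2 / 8)
      = (nr + 1) * Real.exp (lam * (mr + 1) * (sr + 1) / (nr + 1) + (sr + 1) * lam ^ 2 / 8) := by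
    rw [mul_assoc, ← Real.exp_add]
    congr 2
    ring
  calc (mr + 1) * Real.exp lam * Real.exp (lam * mr * sr / nr + sr * lam ^ 2 / 8)
      + (br + 1) * Real.exp (lam * (mr + 1) * sr / nr + sr * lam ^ 2 / 8)
      = (nr + 1) * Real.exp (lam * (mr + 1) * (sr + 1) / (nr + 1) + sr * lam ^ 2 / 8) *
          (p * Real.exp (lam * ((1 - p) * c)) + (1 - p) * Real.exp (-(lam * (p * c)))) := lhs_eq
    _ ≤ (nr + 1) * Real.exp (lam * (mr + 1) * (sr + 1) / (nr + 1) + sr * lam ^ 2 / 8) *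
          Real.exp (lam ^ 2 / 8) := mul_le_mul_of_nonneg_left TP (by positivity)
    _ = (nr + 1) * Real.exp (lam * (mr + 1) * (sr + 1) / (nr + 1) + (sr + 1) * lam ^ 2 / 8) :=
        rhs_eq

lemma hyper_mgf (lam : ℝ) (hlam : 0 ≤ lam) :
    ∀ s n m : ℕ, m ≤ n → s ≤ n →
    (∑ j ∈ Finset.range (s + 1),
        (m.choose j : ℝ) * ((n - m).choose (s - j) : ℝ) * Real.exp (lam * j))
      ≤ (n.choose s : ℝ) * Real.exp (lam * m * s / n + s * lam ^ 2 / 8) := by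
  intro s
  induction s with
  | zero =>
    intro n m hmn hsn
    simp
  | succ s ih =>
    intro n m hmn hsn
    obtain ⟨n', rfl⟩ : ∃ n', n = n' + 1 := ⟨n - 1, by omega⟩
    have hsn' : s ≤ n' := by omega
    rcases Nat.eq_zero_or_pos m with rfl | hm0
    · -- m = 0
      rw [Finset.sum_eq_single 0]
      · simp only [Nat.choose_zero_right, Nat.cast_one, Nat.sub_zero, one_mul,
          Nat.cast_zero, mul_zero, Real.exp_zero, mul_one, zero_mul, zero_div, zero_add]
        nth_rewrite 1 [← mul_one (((n' + 1).choose (s + 1) : ℕ) : ℝ)]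
        apply mul_le_mul_of_nonneg_left _ (Nat.cast_nonneg _)
        apply Real.one_le_exp
        positivity
      · intro b _ hb
        rw [Nat.choose_eq_zero_of_lt (by omega)]
        simp
      · intro h; exact absurd (Finset.mem_range.mpr (by omega)) h
    rcases eq_or_lt_of_le hmn with rfl | hmN
    · -- m = n'+1
      rw [Finset.sum_eq_single (s + 1)]
      · rw [Nat.sub_self, Nat.sub_self]
        simp only [Nat.choose_self, Nat.cast_one, mul_one]
        have hne : (((n' + 1 : ℕ) : ℝ)) ≠ 0 := Nat.cast_ne_zero.mpr (by omega)
        have hA : lam * ((n' + 1 : ℕ) : ℝ) * ((s + 1 : ℕ) : ℝ) / ((n' + 1 : ℕ) : ℝ)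
            = lam * ((s + 1 : ℕ) : ℝ) := by
          field_simp
        apply mul_le_mul_of_nonneg_left _ (Nat.cast_nonneg _)
        apply Real.exp_le_exp.mpr
        rw [hA]
        have hpos : (0:ℝ) ≤ ((s + 1 : ℕ) : ℝ) * lam ^ 2 / 8 := by positivity
        linarith
      · intro b hb hbne
        rw [Nat.sub_self, Nat.choose_eq_zero_of_lt
          (show 0 < s + 1 - b by have := Finset.mem_range.mp hb; omega)]
        simp
      · intro h; exact absurd (Finset.mem_range.mpr (by omega)) h
    · -- 0 < m < n'+1
      obtain ⟨m', rfl⟩ : ∃ m', m = m' + 1 := ⟨m - 1, by omega⟩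
      have hm'n' : m' + 1 ≤ n' := by omega
      obtain ⟨b, rfl⟩ : ∃ b, n' = m' + 1 + b := ⟨n' - (m' + 1), by omega⟩
      -- simplify the (n+1-m) subtraction
      have hsub : m' + 1 + b + 1 - (m' + 1) = b + 1 := by omega
      rw [hsub]
      -- IH instances
      have h1 := ih (m' + 1 + b) m' (by omega) (by omega)
      have h2 := ih (m' + 1 + b) (m' + 1) (by omega) (by omega)
      rw [show m' + 1 + b - m' = b + 1 from by omega] at h1
      rw [show m' + 1 + b - (m' + 1) = b from by omega] at h2
      -- key identity
      have key : ((s : ℝ) + 1) *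
          ∑ j ∈ Finset.range (s + 1 + 1),
            ((m' + 1).choose j : ℝ) * ((b + 1).choose (s + 1 - j) : ℝ) * Real.exp (lam * j)
          = ((m' : ℝ) + 1) * Real.exp lam *
              ∑ j ∈ Finset.range (s + 1),
                (m'.choose j : ℝ) * ((b + 1).choose (s - j) : ℝ) * Real.exp (lam * j)
            + ((b : ℝ) + 1) *
              ∑ j ∈ Finset.range (s + 1),
                ((m' + 1).choose j : ℝ) * (b.choose (s - j) : ℝ) * Real.exp (lam * j) := by
        rw [Finset.mul_sum]
        have split : ∀ j ∈ Finset.range (s + 1 + 1),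
            ((s : ℝ) + 1) *
              (((m' + 1).choose j : ℝ) * ((b + 1).choose (s + 1 - j) : ℝ) * Real.exp (lam * j))
            = (j : ℝ) *
                (((m' + 1).choose j : ℝ) * ((b + 1).choose (s + 1 - j) : ℝ) * Real.exp (lam * j))
              + ((s + 1 - j : ℕ) : ℝ) *
                (((m' + 1).choose j : ℝ) * ((b + 1).choose (s + 1 - j) : ℝ) *
                  Real.exp (lam * j)) := by
          intro j hj
          have hj' : j ≤ s + 1 := by have := Finset.mem_range.mp hj; omega
          have hcast : ((s + 1 - j : ℕ) : ℝ) = (s : ℝ) + 1 - (j : ℝ) := by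
            have : ((s + 1 - j : ℕ) : ℝ) = ((s + 1 : ℕ) : ℝ) - (j : ℝ) :=
              Nat.cast_sub hj'
            rw [this]; push_cast; ring
          rw [hcast]; ring
        rw [Finset.sum_congr rfl split, Finset.sum_add_distrib]
        congr 1
        · -- first sum
          rw [Finset.sum_range_succ']
          simp only [Nat.cast_zero, zero_mul, add_zero]
          rw [Finset.mul_sum]
          apply Finset.sum_congr rfl
          intro j hj
          have h2' : s + 1 - (j + 1) = s - j := by omega
          rw [h2']
          have hch : (m' + 1) * m'.choose j = (m' + 1).choose (j + 1) * (j + 1) :=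
            Nat.add_one_mul_choose_eq m' j
          have hch' : ((m' : ℝ) + 1) * (m'.choose j : ℝ)
              = ((m' + 1).choose (j + 1) : ℝ) * ((j : ℝ) + 1) := by
            have := congrArg (fun t : ℕ => (t : ℝ)) hch
            push_cast at this
            linarith
          have hexp : Real.exp (lam * ((j : ℕ) + 1 : ℕ)) = Real.exp lam * Real.exp (lam * j) := by
            rw [← Real.exp_add]
            congr 1
            push_cast
            ring
          push_cast
          push_cast at hexp
          rw [hexp]
          linear_combination (-(((b + 1).choose (s - j) : ℝ) * Real.exp lam * Real.exp (lam * (j:ℝ)))) * hch'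
        · -- second sum
          rw [Finset.sum_range_succ]
          simp only [Nat.sub_self, Nat.cast_zero, zero_mul, add_zero]
          rw [Finset.mul_sum]
          apply Finset.sum_congr rfl
          intro j hj
          have hj' : j ≤ s := by have := Finset.mem_range.mp hj; omega
          have h2' : s + 1 - j = (s - j) + 1 := by omega
          rw [h2']
          have hch : (b + 1) * b.choose (s - j) = (b + 1).choose ((s - j) + 1) * ((s - j) + 1) :=
            Nat.add_one_mul_choose_eq b (s - j)
          have hch' : ((b : ℝ) + 1) * (b.choose (s - j) : ℝ)
              = ((b + 1).choose ((s - j) + 1) : ℝ) * (((s - j : ℕ) : ℝ) + 1) := by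
            have := congrArg (fun t : ℕ => (t : ℝ)) hch
            push_cast at this
            linarith
          push_cast
          linear_combination (-(((m' + 1).choose j : ℝ) * Real.exp (lam * (j:ℝ)))) * hch'
      -- use key and IH
      have hs1 : (0 : ℝ) < (s : ℝ) + 1 := by positivity
      rw [← mul_le_mul_iff_right₀ hs1, key]
      have hCN : ((s : ℝ) + 1) * (((m' + 1 + b + 1).choose (s + 1) : ℕ) : ℝ)
          = (((m' : ℝ) + 1 + (b : ℝ)) + 1) * (((m' + 1 + b).choose s : ℕ) : ℝ) := by
        have hch : (m' + 1 + b + 1) * (m' + 1 + b).choose s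
            = (m' + 1 + b + 1).choose (s + 1) * (s + 1) :=
          Nat.add_one_mul_choose_eq (m' + 1 + b) s
        have := congrArg (fun t : ℕ => (t : ℝ)) hch
        push_cast at this
        linarith
      have goalrhs : ((s : ℝ) + 1) * ((((m' + 1 + b + 1).choose (s + 1)) : ℝ) *
            Real.exp (lam * ((m' + 1 : ℕ) : ℝ) * ((s + 1 : ℕ) : ℝ) / ((m' + 1 + b + 1 : ℕ) : ℝ)
              + ((s + 1 : ℕ) : ℝ) * lam ^ 2 / 8))
          = (((m' + 1 + b).choose s : ℕ) : ℝ) *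
              ((((m' : ℝ) + 1 + (b : ℝ)) + 1) *
                Real.exp (lam * ((m' + 1 : ℕ) : ℝ) * ((s + 1 : ℕ) : ℝ) / ((m' + 1 + b + 1 : ℕ) : ℝ)
                  + ((s + 1 : ℕ) : ℝ) * lam ^ 2 / 8)) := by
        rw [← mul_assoc, hCN]; ring
      rw [goalrhs]
      have S1nn : (0:ℝ) ≤ ∑ j ∈ Finset.range (s + 1),
          (m'.choose j : ℝ) * ((b + 1).choose (s - j) : ℝ) * Real.exp (lam * j) := by
        apply Finset.sum_nonneg; intro j _; positivity
      have S2nn : (0:ℝ) ≤ ∑ j ∈ Finset.range (s + 1),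
          ((m' + 1).choose j : ℝ) * (b.choose (s - j) : ℝ) * Real.exp (lam * j) := by
        apply Finset.sum_nonneg; intro j _; positivity
      have step1 : ((m' : ℝ) + 1) * Real.exp lam *
            (∑ j ∈ Finset.range (s + 1),
              (m'.choose j : ℝ) * ((b + 1).choose (s - j) : ℝ) * Real.exp (lam * j))
          + ((b : ℝ) + 1) *
            (∑ j ∈ Finset.range (s + 1),
              ((m' + 1).choose j : ℝ) * (b.choose (s - j) : ℝ) * Real.exp (lam * j))
          ≤ ((m' : ℝ) + 1) * Real.exp lam *
              (((m' + 1 + b).choose s : ℝ) *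
                Real.exp (lam * m' * s / ((m' + 1 + b : ℕ) : ℝ) + s * lam ^ 2 / 8))
            + ((b : ℝ) + 1) *
              (((m' + 1 + b).choose s : ℝ) *
                Real.exp (lam * ((m' + 1 : ℕ) : ℝ) * s / ((m' + 1 + b : ℕ) : ℝ)
                  + s * lam ^ 2 / 8)) := by
        apply add_le_add
        · exact mul_le_mul_of_nonneg_left h1 (by positivity)
        · exact mul_le_mul_of_nonneg_left h2 (by positivity)
      refine le_trans step1 ?_
      have hsr : (s : ℝ) ≤ (m' : ℝ) + 1 + (b : ℝ) := by exact_mod_cast hsn'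
      have hcore := core (m' : ℝ) (b : ℝ) (s : ℝ) lam (Nat.cast_nonneg _) (Nat.cast_nonneg _)
        (Nat.cast_nonneg _) hsr hlam
      have hCnn : (0:ℝ) ≤ ((m' + 1 + b).choose s : ℝ) := Nat.cast_nonneg _
      calc ((m' : ℝ) + 1) * Real.exp lam *
            (((m' + 1 + b).choose s : ℝ) *
              Real.exp (lam * m' * s / ((m' + 1 + b : ℕ) : ℝ) + s * lam ^ 2 / 8))
          + ((b : ℝ) + 1) *
            (((m' + 1 + b).choose s : ℝ) *
              Real.exp (lam * ((m' + 1 : ℕ) : ℝ) * s / ((m' + 1 + b : ℕ) : ℝ)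
                + s * lam ^ 2 / 8))
          = ((m' + 1 + b).choose s : ℝ) *
              (((m' : ℝ) + 1) * Real.exp lam *
                Real.exp (lam * m' * s / ((m' : ℝ) + 1 + (b : ℝ)) + s * lam ^ 2 / 8)
              + ((b : ℝ) + 1) *
                Real.exp (lam * ((m' : ℝ) + 1) * s / ((m' : ℝ) + 1 + (b : ℝ))
                  + s * lam ^ 2 / 8)) := by
            push_cast
            ring
        _ ≤ ((m' + 1 + b).choose s : ℝ) *
              ((((m' : ℝ) + 1 + (b : ℝ)) + 1) *
                Real.exp (lam * ((m' : ℝ) + 1) * ((s : ℝ) + 1) / (((m' : ℝ) + 1 + (b : ℝ)) + 1)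
                  + ((s : ℝ) + 1) * lam ^ 2 / 8)) := mul_le_mul_of_nonneg_left hcore hCnn
        _ = (((m' + 1 + b).choose s : ℕ) : ℝ) *
              ((((m' : ℝ) + 1 + (b : ℝ)) + 1) *
                Real.exp (lam * ((m' + 1 : ℕ) : ℝ) * ((s + 1 : ℕ) : ℝ) / ((m' + 1 + b + 1 : ℕ) : ℝ)
                  + ((s + 1 : ℕ) : ℝ) * lam ^ 2 / 8)) := by
            push_cast
            ring_nf

lemma hyper_tail (n s m t : ℕ) (hs : 1 ≤ s) (hsn : s ≤ n) (hmn : m ≤ n)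
    (g' : ℝ) (hg' : 0 ≤ g') (ht : (m : ℝ) * s / n + g' ≤ (t : ℝ)) :
    (∑ j ∈ Finset.Icc t s, (m.choose j : ℝ) * ((n - m).choose (s - j) : ℝ))
      ≤ (n.choose s : ℝ) * Real.exp (-2 * g' ^ 2 / s) := by
  have hs0 : (0:ℝ) < s := by exact_mod_cast hs
  obtain ⟨lam, hlamdef⟩ : ∃ x : ℝ, x = 4 * g' / s := ⟨_, rfl⟩
  have hlam : 0 ≤ lam := by rw [hlamdef]; positivity
  have step1 : ∀ j ∈ Finset.Icc t s, (m.choose j : ℝ) * ((n - m).choose (s - j) : ℝ)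
      ≤ Real.exp (-(lam * t)) *
        ((m.choose j : ℝ) * ((n - m).choose (s - j) : ℝ) * Real.exp (lam * j)) := by
    intro j hj
    obtain ⟨hj1, hj2⟩ := Finset.mem_Icc.mp hj
    have htj : (t : ℝ) ≤ (j : ℝ) := by exact_mod_cast hj1
    have h1 : (1 : ℝ) ≤ Real.exp (-(lam * t)) * Real.exp (lam * j) := by
      rw [← Real.exp_add]
      apply Real.one_le_exp
      nlinarith
    have hw : (0:ℝ) ≤ (m.choose j : ℝ) * ((n - m).choose (s - j) : ℝ) := by positivity
    nlinarith [mul_le_mul_of_nonneg_left h1 hw]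
  have hsub : Finset.Icc t s ⊆ Finset.range (s + 1) := by
    intro j hj
    obtain ⟨hj1, hj2⟩ := Finset.mem_Icc.mp hj
    exact Finset.mem_range.mpr (by omega)
  have step2 : (∑ j ∈ Finset.Icc t s, (m.choose j : ℝ) * ((n - m).choose (s - j) : ℝ))
      ≤ Real.exp (-(lam * t)) *
          ∑ j ∈ Finset.range (s + 1),
            (m.choose j : ℝ) * ((n - m).choose (s - j) : ℝ) * Real.exp (lam * j) := by
    calc (∑ j ∈ Finset.Icc t s, (m.choose j : ℝ) * ((n - m).choose (s - j) : ℝ))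
        ≤ ∑ j ∈ Finset.Icc t s, Real.exp (-(lam * t)) *
            ((m.choose j : ℝ) * ((n - m).choose (s - j) : ℝ) * Real.exp (lam * j)) :=
          Finset.sum_le_sum step1
      _ = Real.exp (-(lam * t)) * ∑ j ∈ Finset.Icc t s,
            (m.choose j : ℝ) * ((n - m).choose (s - j) : ℝ) * Real.exp (lam * j) := by
          rw [Finset.mul_sum]
      _ ≤ Real.exp (-(lam * t)) * ∑ j ∈ Finset.range (s + 1),
            (m.choose j : ℝ) * ((n - m).choose (s - j) : ℝ) * Real.exp (lam * j) := by
          apply mul_le_mul_of_nonneg_left _ (Real.exp_pos _).le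
          apply Finset.sum_le_sum_of_subset_of_nonneg hsub
          intro j _ _
          positivity
  have hmgf := hyper_mgf lam hlam s n m hmn hsn
  have hfin : lam * m * s / n + s * lam ^ 2 / 8 + -(lam * t) ≤ -2 * g' ^ 2 / s := by
    have h1 : lam * ((m : ℝ) * s / n + g') ≤ lam * t := mul_le_mul_of_nonneg_left ht hlam
    have h2 : (s:ℝ) * lam ^ 2 / 8 = 2 * g' ^ 2 / s := by
      rw [hlamdef]; field_simp; ring
    have h3 : lam * g' = 4 * g' ^ 2 / s := by
      rw [hlamdef]; field_simp
    calc lam * (m:ℝ) * s / n + s * lam ^ 2 / 8 + -(lam * t)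
        ≤ lam * (m:ℝ) * s / n + (s:ℝ) * lam ^ 2 / 8 + -(lam * ((m:ℝ) * s / n + g')) := by
          linarith [h1]
      _ = (s:ℝ) * lam ^ 2 / 8 - lam * g' := by ring
      _ = 2 * g' ^ 2 / s - 4 * g' ^ 2 / s := by rw [h2, h3]
      _ = -2 * g' ^ 2 / s := by ring
  calc (∑ j ∈ Finset.Icc t s, (m.choose j : ℝ) * ((n - m).choose (s - j) : ℝ))
      ≤ Real.exp (-(lam * t)) *
          ∑ j ∈ Finset.range (s + 1),
            (m.choose j : ℝ) * ((n - m).choose (s - j) : ℝ) * Real.exp (lam * j) := step2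
    _ ≤ Real.exp (-(lam * t)) *
          ((n.choose s : ℝ) * Real.exp (lam * m * s / n + s * lam ^ 2 / 8)) :=
        mul_le_mul_of_nonneg_left hmgf (Real.exp_pos _).le
    _ = (n.choose s : ℝ) * Real.exp (lam * m * s / n + s * lam ^ 2 / 8 + -(lam * t)) := by
        rw [show Real.exp (-(lam * t)) *
              ((n.choose s : ℝ) * Real.exp (lam * m * s / n + s * lam ^ 2 / 8))
            = (n.choose s : ℝ) * (Real.exp (lam * m * s / n + s * lam ^ 2 / 8) *
                Real.exp (-(lam * t))) from by ring]
        rw [← Real.exp_add]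
    _ ≤ (n.choose s : ℝ) * Real.exp (-2 * g' ^ 2 / s) := by
        apply mul_le_mul_of_nonneg_left _ (Nat.cast_nonneg _)
        exact Real.exp_le_exp.mpr hfin

lemma sorted_count_lower (l : List ℝ) (hl : l.Pairwise (· ≤ ·)) (t : ℕ) (ht1 : 1 ≤ t)
    (htl : t ≤ l.length) (K : ℝ) (hK : l.getD (t - 1) 0 < K) :
    t ≤ l.countP (fun y => decide (y < K)) := by
  have hidx : t - 1 < l.length := by omega
  rw [List.getD_eq_getElem l 0 hidx] at hK
  have htake : ∀ a ∈ l.take t, (fun y => decide (y < K)) a = true := by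
    intro a ha
    obtain ⟨i, hi, hia⟩ := List.mem_iff_getElem.mp ha
    have hi' : i < t := by
      have : (l.take t).length = min t l.length := List.length_take
      omega
    have hil : i < l.length := by omega
    rw [List.getElem_take] at hia
    have hle : l[i] ≤ l[t - 1] := by
      have := List.Pairwise.rel_get_of_le hl (a := ⟨i, hil⟩) (b := ⟨t - 1, hidx⟩)
        (by simp [Fin.le_def]; omega)
      simpa [List.get_eq_getElem] using this
    have : a < K := by rw [← hia]; exact lt_of_le_of_lt hle hK
    simpa using this
  have hcnt : (l.take t).countP (fun y => decide (y < K)) = (l.take t).length :=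
    List.countP_eq_length.mpr htake
  have hlen : (l.take t).length = t := by
    rw [List.length_take]; omega
  have hsplit : l.countP (fun y => decide (y < K))
      = (l.take t).countP (fun y => decide (y < K))
        + (l.drop t).countP (fun y => decide (y < K)) := by
    conv_lhs => rw [← List.take_append_drop t l]
    rw [List.countP_append]
  omega
lemma sorted_count_upper (l : List ℝ) (hl : l.Pairwise (· ≤ ·)) (k : ℕ) (hk1 : 1 ≤ k)
    (hkl : k ≤ l.length) :
    l.countP (fun y => decide (y < l.getD (k - 1) 0)) ≤ k - 1 := by
  have hidx : k - 1 < l.length := by omega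
  rw [List.getD_eq_getElem l 0 hidx]
  obtain ⟨v, hv⟩ : ∃ v : ℝ, v = l[k - 1] := ⟨_, rfl⟩
  rw [← hv]
  have hdrop : (l.drop (k - 1)).countP (fun y => decide (y < v)) = 0 := by
    rw [List.countP_eq_zero]
    intro a ha
    obtain ⟨i, hi, hia⟩ := List.mem_iff_getElem.mp ha
    have hil : k - 1 + i < l.length := by
      have : (l.drop (k - 1)).length = l.length - (k - 1) := List.length_drop
      omega
    rw [List.getElem_drop] at hia
    have hle : l[k - 1] ≤ l[k - 1 + i] := by
      have := List.Pairwise.rel_get_of_le hl (a := ⟨k - 1, hidx⟩) (b := ⟨k - 1 + i, hil⟩)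
        (by simp [Fin.le_def])
      simpa [List.get_eq_getElem] using this
    have : ¬ (a < v) := by rw [← hia, hv]; exact not_lt.mpr hle
    simpa using this
  have hsplit : l.countP (fun y => decide (y < v))
      = (l.take (k - 1)).countP (fun y => decide (y < v))
        + (l.drop (k - 1)).countP (fun y => decide (y < v)) := by
    conv_lhs => rw [← List.take_append_drop (k - 1) l]
    rw [List.countP_append]
  have htake : (l.take (k - 1)).countP (fun y => decide (y < v))
      ≤ (l.take (k - 1)).length := List.countP_le_length
  have hlen : (l.take (k - 1)).length = k - 1 := by
    rw [List.length_take]; omega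
  omega

open Classical in
lemma kth_count_lower (M : Multiset ℝ) (t : ℕ) (ht1 : 1 ≤ t) (htM : t ≤ Multiset.card M)
    (K : ℝ) (h : kthSmallest M t < K) : t ≤ M.countP (fun y => y < K) := by
  rw [kthSmallest] at h
  have hs := sorted_count_lower (M.sort (· ≤ ·)) (Multiset.pairwise_sort _ _) t ht1
    (by rw [Multiset.length_sort]; exact htM) K h
  have e : M.countP (fun y => y < K)
      = (M.sort (· ≤ ·)).countP (fun y => decide (y < K)) := by
    conv_lhs => rw [← Multiset.sort_eq M (· ≤ ·)]
    rw [Multiset.coe_countP]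
  omega

open Classical in
lemma kth_count_upper (M : Multiset ℝ) (k : ℕ) (hk1 : 1 ≤ k) (hkM : k ≤ Multiset.card M) :
    M.countP (fun y => y < kthSmallest M k) ≤ k - 1 := by
  have hs := sorted_count_upper (M.sort (· ≤ ·)) (Multiset.pairwise_sort _ _) k hk1
    (by rw [Multiset.length_sort]; exact hkM)
  rw [kthSmallest]
  obtain ⟨v, hv⟩ : ∃ v : ℝ, v = (M.sort (· ≤ ·)).getD (k - 1) 0 := ⟨_, rfl⟩
  rw [← hv] at hs ⊢
  have e : M.countP (fun y => y < v) = (M.sort (· ≤ ·)).countP (fun y => decide (y < v)) := by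
    conv_lhs => rw [← Multiset.sort_eq M (· ≤ ·)]
    rw [Multiset.coe_countP]
  omega

/-- Corollary (a): with pivot `v := y*_{i_v}`, `i_v = ⌈ks/n + g⌉`, `1 ≤ i_v ≤ s`
and `k < n/2`, one has `P[v < x*_k] ≤ exp (-2g²/s)`. -/
theorem pivot_below_tail
    (n s k : ℕ) (hs : 1 ≤ s) (hsn : s ≤ n) (hk1 : 1 ≤ k) (hkn : k ≤ n)
    (g : ℝ) (hg : 0 ≤ g) (hkhalf : (k : ℝ) < n / 2)
    (x : Fin n → ℝ) (hx : Monotone x)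
    {Ω : Type*} [MeasurableSpace Ω] (μ : Measure Ω) [IsProbabilityMeasure μ]
    (S : Ω → Finset (Fin n)) (hScard : ∀ ω, (S ω).card = s)
    (hunif : ∀ A : Finset (Fin n), A.card = s →
      μ {ω | S ω = A} = 1 / (n.choose s))
    (iv : ℤ) (hiv : iv = ⌈(k : ℝ) * s / n + g⌉)
    (hiv1 : 1 ≤ iv) (hivs : iv ≤ (s : ℤ)) :
    μ {ω | kthSmallest ((S ω).val.map x) iv.toNat <
           kthSmallest ((Finset.univ : Finset (Fin n)).val.map x) k} ≤
      ENNReal.ofReal (Real.exp (-2 * g ^ 2 / s)) := by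
  classical
  set K := kthSmallest ((Finset.univ : Finset (Fin n)).val.map x) k with hK
  set t := iv.toNat with htdef
  have ht1 : 1 ≤ t := by omega
  have hts : t ≤ s := by omega
  set B := Finset.univ.filter (fun i : Fin n => x i < K) with hB
  set m := B.card with hm
  have hmn : m ≤ n := by
    calc m ≤ Fintype.card (Fin n) := Finset.card_le_univ B
      _ = n := Fintype.card_fin n
  -- count identity
  have hcount : ∀ A : Finset (Fin n),
      (A.val.map x).countP (fun y => y < K) = (A ∩ B).card := by
    intro A
    rw [Multiset.countP_map]
    have : A ∩ B = A.filter (fun i => x i < K) := by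
      rw [hB]
      ext i
      simp [Finset.mem_filter, Finset.mem_inter]
    rw [this]
    rfl
  -- m ≤ k - 1
  have hmk : m ≤ k - 1 := by
    have hcard : Multiset.card ((Finset.univ : Finset (Fin n)).val.map x) = n := by
      simp
    have := kth_count_upper ((Finset.univ : Finset (Fin n)).val.map x) k hk1
      (by rw [hcard]; exact hkn)
    rw [← hK] at this
    have h2 := hcount (Finset.univ : Finset (Fin n))
    rw [Finset.univ_inter] at h2
    omega
  -- bad set
  set bad := Finset.univ.filter (fun A : Finset (Fin n) =>
    A.card = s ∧ kthSmallest (A.val.map x) t < K) with hbad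
  have hsubset : {ω | kthSmallest ((S ω).val.map x) t < K} ⊆ ⋃ A ∈ bad, {ω | S ω = A} := by
    intro ω hω
    refine Set.mem_biUnion ?_ rfl
    rw [hbad]
    exact Finset.mem_filter.mpr ⟨Finset.mem_univ _, hScard ω, hω⟩
  have hmeas : μ {ω | kthSmallest ((S ω).val.map x) t < K}
      ≤ ∑ A ∈ bad, μ {ω | S ω = A} :=
    le_trans (measure_mono hsubset) (measure_biUnion_finset_le bad _)
  have hsum : ∑ A ∈ bad, μ {ω | S ω = A} = bad.card * (1 / (n.choose s : ℝ≥0∞)) := by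
    rw [Finset.sum_congr rfl (fun A hA => hunif A (Finset.mem_filter.mp hA).2.1),
      Finset.sum_const, nsmul_eq_mul]
  -- card bound
  have hinter : ∀ A ∈ bad, A.card = s ∧ t ≤ (A ∩ B).card := by
    intro A hA
    obtain ⟨-, hAcard, hAkth⟩ := Finset.mem_filter.mp hA
    refine ⟨hAcard, ?_⟩
    rw [← hcount A]
    apply kth_count_lower _ _ ht1 _ _ hAkth
    rw [Multiset.card_map]
    exact le_trans hts (le_of_eq hAcard.symm)
  have hbadcard : bad.card ≤ ∑ j ∈ Finset.Icc t s, (m.choose j) * ((n - m).choose (s - j)) := by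
    have hle : bad.card ≤ ((Finset.Icc t s).biUnion (fun j =>
        (B.powersetCard j) ×ˢ ((Bᶜ).powersetCard (s - j)))).card := by
      apply Finset.card_le_card_of_injOn (fun A => (A ∩ B, A \ B))
      · intro A hA
        obtain ⟨hAcard, hAt⟩ := hinter A hA
        have hAj : (A ∩ B).card + (A \ B).card = A.card := Finset.card_inter_add_card_sdiff A B
        refine Finset.mem_biUnion.mpr ⟨(A ∩ B).card, ?_, ?_⟩
        · refine Finset.mem_Icc.mpr ⟨hAt, ?_⟩
          rw [← hAcard]
          exact Finset.card_le_card Finset.inter_subset_left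
        · refine Finset.mem_product.mpr ⟨?_, ?_⟩
          · exact Finset.mem_powersetCard.mpr ⟨Finset.inter_subset_right, rfl⟩
          · refine Finset.mem_powersetCard.mpr ⟨?_, show (A \ B).card = s - (A ∩ B).card by omega⟩
            intro i hi
            rw [Finset.mem_compl]
            exact (Finset.mem_sdiff.mp hi).2
      · intro A hA A' hA' h
        have h1 : A ∩ B = A' ∩ B := congrArg Prod.fst h
        have h2 : A \ B = A' \ B := congrArg Prod.snd h
        calc A = (A \ B) ∪ (A ∩ B) := (Finset.sdiff_union_inter A B).symm
          _ = (A' \ B) ∪ (A' ∩ B) := by rw [h1, h2]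
          _ = A' := Finset.sdiff_union_inter A' B
    refine le_trans hle (le_trans (Finset.card_biUnion_le) (le_of_eq ?_))
    apply Finset.sum_congr rfl
    intro j _
    rw [Finset.card_product, Finset.card_powersetCard, Finset.card_powersetCard,
      Finset.card_compl, Fintype.card_fin]
  -- real tail bound
  have hn0 : (0:ℝ) < n := by
    have : 1 ≤ n := le_trans hs hsn
    exact_mod_cast this
  have htreal : (m : ℝ) * s / n + g ≤ (t : ℝ) := by
    have h1 : ((k : ℝ) * s / n + g) ≤ ((iv : ℤ) : ℝ) := by
      rw [hiv]; exact Int.le_ceil _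
    have h2 : ((t : ℕ) : ℝ) = ((iv : ℤ) : ℝ) := by
      rw [htdef]
      exact_mod_cast Int.toNat_of_nonneg (by omega)
    have h3 : (m : ℝ) ≤ (k : ℝ) := by
      have : m ≤ k := by omega
      exact_mod_cast this
    have h4 : (m : ℝ) * s / n ≤ (k : ℝ) * s / n := by
      rw [mul_div_assoc, mul_div_assoc]
      exact mul_le_mul_of_nonneg_right h3 (by positivity)
    rw [h2]
    linarith
  have htail := hyper_tail n s m t hs hsn hmn g hg htreal
  -- combine
  have hCpos : 0 < n.choose s := Nat.choose_pos hsn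
  have hCposR : (0:ℝ) < (n.choose s : ℝ) := by exact_mod_cast hCpos
  have hreal : ((bad.card : ℕ) : ℝ) / (n.choose s : ℝ) ≤ Real.exp (-2 * g ^ 2 / s) := by
    rw [div_le_iff₀ hCposR]
    have hc1 : ((bad.card : ℕ) : ℝ)
        ≤ ((∑ j ∈ Finset.Icc t s, (m.choose j) * ((n - m).choose (s - j)) : ℕ) : ℝ) := by
      exact_mod_cast hbadcard
    have hc2 : ((∑ j ∈ Finset.Icc t s, (m.choose j) * ((n - m).choose (s - j)) : ℕ) : ℝ)
        = ∑ j ∈ Finset.Icc t s, (m.choose j : ℝ) * ((n - m).choose (s - j) : ℝ) := by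
      push_cast
      rfl
    rw [hc2] at hc1
    calc ((bad.card : ℕ) : ℝ)
        ≤ ∑ j ∈ Finset.Icc t s, (m.choose j : ℝ) * ((n - m).choose (s - j) : ℝ) := hc1
      _ ≤ (n.choose s : ℝ) * Real.exp (-2 * g ^ 2 / s) := htail
      _ = Real.exp (-2 * g ^ 2 / s) * (n.choose s : ℝ) := by ring
  have hfinal : (bad.card : ℝ≥0∞) * (1 / (n.choose s : ℝ≥0∞))
      ≤ ENNReal.ofReal (Real.exp (-2 * g ^ 2 / s)) := by
    have he : (bad.card : ℝ≥0∞) * (1 / (n.choose s : ℝ≥0∞))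
        = ENNReal.ofReal (((bad.card : ℕ) : ℝ) / (n.choose s : ℝ)) := by
      rw [ENNReal.ofReal_div_of_pos hCposR, ENNReal.ofReal_natCast, ENNReal.ofReal_natCast,
        one_div, div_eq_mul_inv]
    rw [he]
    exact ENNReal.ofReal_le_ofReal hreal
  calc μ {ω | kthSmallest ((S ω).val.map x) t < K} ≤ ∑ A ∈ bad, μ {ω | S ω = A} := hmeas
    _ = bad.card * (1 / (n.choose s : ℝ≥0∞)) := hsum
    _ ≤ ENNReal.ofReal (Real.exp (-2 * g ^ 2 / s)) := hfinal
end

section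
/- With the pivot v := y*_{i_v}, where i_v = min{⌈ks/n + g⌉, s} and k < n/2, and k_r := min{⌈k + 2gn/s⌉, n}, the probability that x*_{k_r} < v is at most exp(−2g²/s). -/
open MeasureTheory

/-- Core logarithmic inequality: for `p ∈ [0,1]`, `z ∈ (0,1]`,
`4p(1-p)(1-z) ≤ (1-p+pz)·(-log z)`. -/
lemma core_log_ineq (p : ℝ) (hp0 : 0 ≤ p) (hp1 : p ≤ 1)
    (z : ℝ) (hz0 : 0 < z) (hz1 : z ≤ 1) :
    4 * p * (1 - p) * (1 - z) ≤ (1 - p + p * z) * (-Real.log z) := by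
  have hden : ∀ w : ℝ, 0 < w → 0 < 1 - p + p * w := by
    intro w hw
    rcases lt_or_eq_of_le hp1 with h | h
    · nlinarith
    · nlinarith
  set H : ℝ → ℝ := fun w => -Real.log w - 4 * p * (1 - p) * (1 - w) / (1 - p + p * w) with hH
  have hderiv : ∀ w : ℝ, 0 < w → HasDerivAt H (-w⁻¹ + 4 * p * (1 - p) / (1 - p + p * w) ^ 2) w := by
    intro w hw
    have h1 : HasDerivAt (fun y : ℝ => -Real.log y) (-w⁻¹) w := (Real.hasDerivAt_log hw.ne').neg
    have hu : HasDerivAt (fun y : ℝ => 4 * p * (1 - p) * (1 - y)) (-(4 * p * (1 - p))) w := by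
      simpa using ((hasDerivAt_id w).const_sub 1).const_mul (4 * p * (1 - p))
    have hv : HasDerivAt (fun y : ℝ => 1 - p + p * y) p w := by
      simpa using ((hasDerivAt_id w).const_mul p).const_add (1 - p)
    have h2 := hu.div hv (hden w hw).ne'
    have h3 := h1.sub h2
    refine h3.congr_deriv ?_
    have := (hden w hw).ne'
    field_simp
    ring
  have key : H z ≥ H 1 := by
    have hmono : AntitoneOn H (Set.Icc z 1) := by
      apply antitoneOn_of_deriv_nonpos (convex_Icc z 1)
      · intro w hw
        exact ((hderiv w (lt_of_lt_of_le hz0 hw.1)).continuousAt).continuousWithinAt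
      · intro w hw
        rw [interior_Icc] at hw
        exact (hderiv w (lt_trans hz0 hw.1)).differentiableAt.differentiableWithinAt
      · intro w hw
        rw [interior_Icc] at hw
        have hw0 : 0 < w := lt_trans hz0 hw.1
        rw [(hderiv w hw0).deriv]
        have hd := hden w hw0
        have hsq : 4 * p * (1 - p) * w ≤ (1 - p + p * w) ^ 2 := by nlinarith [sq_nonneg (1 - p - p * w)]
        have : 4 * p * (1 - p) / (1 - p + p * w) ^ 2 ≤ w⁻¹ := by
          rw [inv_eq_one_div, div_le_div_iff₀ (by positivity) hw0]
          linarith [hsq]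
        linarith
    exact hmono (Set.left_mem_Icc.2 hz1) (Set.right_mem_Icc.2 hz1) hz1
  have hH1 : H 1 = 0 := by simp [hH]
  have hHz : H z = -Real.log z - 4 * p * (1 - p) * (1 - z) / (1 - p + p * z) := rfl
  rw [hH1] at key
  rw [hHz] at key
  have hd := hden z hz0
  rw [ge_iff_le, sub_nonneg, div_le_iff₀ hd] at key
  linarith [key]

/-- Hoeffding's analytic lemma (Bernoulli case): for `p ∈ [0,1]`, `λ ≥ 0`,
`1 - p + p e^{-λ} ≤ exp(-λ p + λ²/8)`. -/
lemma hoeffding_bernoulli (p : ℝ) (hp0 : 0 ≤ p) (hp1 : p ≤ 1) (l : ℝ) (hl : 0 ≤ l) :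
    1 - p + p * Real.exp (-l) ≤ Real.exp (-l * p + l ^ 2 / 8) := by
  have hden : ∀ w : ℝ, 0 < w → 0 < 1 - p + p * w := by
    intro w hw
    rcases lt_or_eq_of_le hp1 with h | h
    · nlinarith
    · nlinarith
  set F : ℝ → ℝ := fun w => -w * p + w ^ 2 / 8 - Real.log (1 - p + p * Real.exp (-w)) with hF
  have hderiv : ∀ w : ℝ, HasDerivAt F
      (-p + w / 4 + p * Real.exp (-w) / (1 - p + p * Real.exp (-w))) w := by
    intro w
    have he : HasDerivAt (fun y : ℝ => Real.exp (-y)) (-Real.exp (-w)) w := by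
      simpa [Function.comp_def] using (Real.hasDerivAt_exp (-w)).comp w ((hasDerivAt_id w).neg)
    have hinner : HasDerivAt (fun y : ℝ => 1 - p + p * Real.exp (-y)) (p * -Real.exp (-w)) w :=
      (he.const_mul p).const_add (1 - p)
    have hpos := hden (Real.exp (-w)) (Real.exp_pos _)
    have hlog := (Real.hasDerivAt_log hpos.ne').comp w hinner
    have h1 : HasDerivAt (fun y : ℝ => -y * p + y ^ 2 / 8) (-p + w / 4) w := by
      have : HasDerivAt (fun y : ℝ => -y * p) (-p) w := by
        simpa using ((hasDerivAt_id w).neg.mul_const p)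
      have h2 : HasDerivAt (fun y : ℝ => y ^ 2 / 8) (w / 4) w := by
        have h := (hasDerivAt_pow 2 w).div_const 8
        refine h.congr_deriv ?_
        push_cast
        ring
      exact this.add h2
    have := h1.sub hlog
    refine this.congr_deriv ?_
    have hne := hpos.ne'
    field_simp
    ring
  have hF0 : F 0 = 0 := by simp [hF]
  have key : F 0 ≤ F l := by
    have hmono : MonotoneOn F (Set.Icc 0 l) := by
      apply monotoneOn_of_deriv_nonneg (convex_Icc 0 l)
      · intro w hw
        exact (hderiv w).continuousAt.continuousWithinAt
      · intro w hw
        exact (hderiv w).differentiableAt.differentiableWithinAt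
      · intro w hw
        rw [interior_Icc] at hw
        have hw0 : 0 < w := hw.1
        rw [(hderiv w).deriv]
        set z := Real.exp (-w) with hz
        have hz0 : 0 < z := Real.exp_pos _
        have hz1 : z ≤ 1 := Real.exp_le_one_iff.2 (by linarith)
        have hcore := core_log_ineq p hp0 hp1 z hz0 hz1
        have hlogz : -Real.log z = w := by rw [hz, Real.log_exp]; ring
        rw [hlogz] at hcore
        have hd := hden z hz0
        -- -p + w/4 + p*z/(1-p+p*z) ≥ 0  ⟺  4*p*(1-p)*(1-z) ≤ (1-p+p*z)*w  (divided by 4(1-p+pz))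
        rw [← sub_nonneg]
        have expand : -p + w / 4 + p * z / (1 - p + p * z) - 0
            = ((1 - p + p * z) * w - 4 * p * (1 - p) * (1 - z)) / (4 * (1 - p + p * z)) := by
          field_simp
          ring
        rw [expand]
        apply div_nonneg (by linarith) (by linarith)
    exact hmono (Set.left_mem_Icc.2 hl) (Set.right_mem_Icc.2 hl) hl
  rw [hF0] at key
  have hpos := hden (Real.exp (-l)) (Real.exp_pos _)
  have : Real.log (1 - p + p * Real.exp (-l)) ≤ -l * p + l ^ 2 / 8 := by
    simp only [hF] at key; linarith
  calc 1 - p + p * Real.exp (-l) = Real.exp (Real.log (1 - p + p * Real.exp (-l))) :=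
        (Real.exp_log hpos).symm
    _ ≤ Real.exp (-l * p + l ^ 2 / 8) := Real.exp_le_exp.2 this

/-- Two-term AM-GM for powers: `a^s' * b ≤ ((s'*a + b)/(s'+1))^(s'+1)` for `a,b ≥ 0`. -/
lemma amgm_pow (a b : ℝ) (ha : 0 ≤ a) (hb : 0 ≤ b) (s' : ℕ) :
    a ^ s' * b ≤ ((s' * a + b) / (s' + 1)) ^ (s' + 1) := by
  set s : ℕ := s' + 1 with hsdef
  have hs : (0:ℝ) < s := by positivity
  have hw1 : (0:ℝ) ≤ (s' : ℝ) / s := by positivity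
  have hw2 : (0:ℝ) ≤ 1 / (s : ℝ) := by positivity
  have hw : (s' : ℝ) / s + 1 / s = 1 := by
    rw [← add_div, hsdef]
    push_cast
    rw [div_self (by positivity)]
  have gm := Real.geom_mean_le_arith_mean2_weighted hw1 hw2 ha hb hw
  have key : (a ^ ((s':ℝ) / s) * b ^ (1 / (s:ℝ))) ^ (s:ℕ) ≤ ((s':ℝ) / s * a + 1 / s * b) ^ (s:ℕ) := by
    apply pow_le_pow_left₀ (by positivity) gm
  have hsne : (s:ℝ) ≠ 0 := ne_of_gt hs
  have e1 : (s':ℝ)/s * s = (s':ℝ) := by field_simp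
  have e2 : (1:ℝ)/(s:ℝ) * s = 1 := by field_simp
  have lhs_eq : (a ^ ((s':ℝ) / s) * b ^ (1 / (s:ℝ))) ^ (s:ℕ) = a ^ s' * b := by
    rw [← Real.rpow_natCast (a ^ ((s':ℝ) / s) * b ^ (1 / (s:ℝ))) s,
      Real.mul_rpow (by positivity) (by positivity), ← Real.rpow_mul ha, ← Real.rpow_mul hb,
      e1, e2, Real.rpow_natCast, Real.rpow_one]
  have rhs_eq : ((s':ℝ) / s * a + 1 / s * b) ^ (s:ℕ) = (((s':ℝ) * a + b) / s) ^ (s:ℕ) := by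
    congr 1
    field_simp
  rw [lhs_eq, rhs_eq] at key
  simpa [hsdef] using key

/-- Chvátal-type bound on the hypergeometric "moment generating" polynomial. -/
lemma chvatal (t : ℝ) (ht0 : 0 ≤ t) (ht1 : t ≤ 1) :
    ∀ N K s : ℕ, K ≤ N →
    (∑ j ∈ Finset.range (s+1), (K.choose j : ℝ) * ((N - K).choose (s - j) : ℝ) * t ^ j)
      ≤ (N.choose s : ℝ) * (1 + ((K:ℝ)/(N:ℝ)) * (t - 1)) ^ s := by
  intro N
  induction N with
  | zero =>
    intro K s hK
    interval_cases K
    cases s with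
    | zero => norm_num
    | succ s' =>
      have hlhs : (∑ j ∈ Finset.range (s'+1+1),
          ((Nat.choose 0 j : ℝ)) * ((Nat.choose (0-0) (s'+1-j) : ℝ)) * t ^ j) = 0 := by
        apply Finset.sum_eq_zero
        intro j hj
        rcases Nat.eq_zero_or_pos j with h | h
        · subst h; simp [Nat.choose_eq_zero_of_lt (Nat.succ_pos s')]
        · simp [Nat.choose_eq_zero_of_lt h]
      rw [hlhs]
      simp [Nat.choose_eq_zero_of_lt (Nat.succ_pos s')]
  | succ N IH =>
    intro K s hK
    match K with
    | 0 =>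
      have hlhs : (∑ j ∈ Finset.range (s+1),
          ((Nat.choose 0 j : ℝ)) * ((Nat.choose (N+1-0) (s-j) : ℝ)) * t ^ j)
          = ((N+1).choose s : ℝ) := by
        rw [Finset.sum_eq_single 0]
        · simp
        · intro j hj hj0
          simp [Nat.choose_eq_zero_of_lt (Nat.pos_of_ne_zero hj0)]
        · intro h; exact absurd (Finset.mem_range.2 (Nat.succ_pos s)) h
      rw [hlhs]
      simp
    | (K' + 1) =>
      have hK'N : K' ≤ N := Nat.lt_succ_iff.mp hK
      cases s with
      | zero => simp
      | succ s' =>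
        simp only [Nat.succ_sub_succ]
        -- abbreviations
        set u : ℝ := t - 1 with hu_def
        have hu0 : u ≤ 0 := by simp [hu_def]; linarith
        have hu1 : -1 ≤ u := by simp [hu_def]; linarith
        set q : ℝ := (K' : ℝ) / N with hq_def
        have hqN : q * N = K' := by
          rcases Nat.eq_zero_or_pos N with h | h
          · subst h
            have : K' = 0 := Nat.le_zero.mp hK'N
            subst this; simp [hq_def]
          · rw [hq_def]; field_simp
        have hq0 : 0 ≤ q := by positivity
        have hq1 : q ≤ 1 := by
          rcases Nat.eq_zero_or_pos N with h | h
          · subst h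
            have : K' = 0 := Nat.le_zero.mp hK'N
            subst this; simp [hq_def]
          · rw [hq_def, div_le_one (by exact_mod_cast h)]
            exact_mod_cast hK'N
        set A1 : ℝ := 1 + q * u with hA1_def
        have hA1 : 0 ≤ A1 := by
          have h := mul_le_mul_of_nonneg_left hu1 hq0
          rw [hA1_def]; linarith
        -- the recurrence
        have hrec : (∑ j ∈ Finset.range (s'+1+1),
            (((K'+1).choose j : ℝ)) * (((N - K').choose (s'+1-j) : ℝ)) * t ^ j)
            = t * (∑ j ∈ Finset.range (s'+1),
                ((K'.choose j : ℝ)) * (((N - K').choose (s'-j) : ℝ)) * t ^ j)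
              + ∑ j ∈ Finset.range (s'+1+1),
                ((K'.choose j : ℝ)) * (((N - K').choose (s'+1-j) : ℝ)) * t ^ j := by
          rw [Finset.sum_range_succ' (fun j => (((K'+1).choose j : ℝ)) *
                (((N - K').choose (s'+1-j) : ℝ)) * t ^ j) (s'+1),
            Finset.sum_range_succ' (fun j => ((K'.choose j : ℝ)) *
                (((N - K').choose (s'+1-j) : ℝ)) * t ^ j) (s'+1)]
          simp only [Nat.choose_succ_succ K', Nat.succ_sub_succ, Nat.choose_zero_right,
            Nat.succ_eq_add_one]
          push_cast
          rw [Finset.mul_sum]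
          have hpt : ∀ j ∈ Finset.range (s'+1),
              ((K'.choose j : ℝ) + (K'.choose (j+1) : ℝ)) * ((N - K').choose (s'-j) : ℝ) * t ^ (j+1)
              = t * ((K'.choose j : ℝ) * ((N - K').choose (s'-j) : ℝ) * t ^ j)
                + (K'.choose (j+1) : ℝ) * ((N - K').choose (s'-j) : ℝ) * t ^ (j+1) := by
            intro j hj; ring
          rw [Finset.sum_congr rfl hpt, Finset.sum_add_distrib]
          ring
        rw [hrec]
        have IH1 := IH K' s' hK'N
        have IH2 := IH K' (s'+1) hK'N
        set c1 : ℝ := (N.choose s' : ℝ) with hc1_def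
        set c2 : ℝ := (N.choose (s'+1) : ℝ) with hc2_def
        set C : ℝ := ((N+1).choose (s'+1) : ℝ) with hC_def
        rcases lt_or_ge N s' with hcase | hcase
        · -- degenerate: s' > N, all the binomials vanish
          have hz1 : c1 = 0 := by simp [hc1_def, Nat.choose_eq_zero_of_lt hcase]
          have hz2 : c2 = 0 := by
            simp [hc2_def, Nat.choose_eq_zero_of_lt (Nat.lt_succ_of_lt hcase)]
          have hp0 : (0:ℝ) ≤ ((K':ℝ)+1)/((N:ℝ)+1) := by positivity
          have hp1 : ((K':ℝ)+1)/((N:ℝ)+1) ≤ 1 := by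
            rw [div_le_one (by positivity)]
            have : (K':ℝ) ≤ N := by exact_mod_cast hK'N
            linarith
          have hrhs : (0:ℝ) ≤ C * (1 + (((K'+1 : ℕ):ℝ)/((N+1 : ℕ):ℝ)) * (t-1)) ^ (s'+1) := by
            apply mul_nonneg (by positivity)
            apply pow_nonneg
            push_cast
            have h1 : (((K':ℝ)+1)/((N:ℝ)+1)) * (1 - t) ≤ 1 :=
              mul_le_one₀ hp1 (by linarith) (by linarith)
            linarith
          have hb1 : (∑ j ∈ Finset.range (s'+1),
              ((K'.choose j : ℝ)) * (((N - K').choose (s'-j) : ℝ)) * t ^ j) ≤ 0 := by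
            rw [hz1] at IH1; simpa using IH1
          have hb2 : (∑ j ∈ Finset.range (s'+1+1),
              ((K'.choose j : ℝ)) * (((N - K').choose (s'+1-j) : ℝ)) * t ^ j) ≤ 0 := by
            rw [hz2] at IH2; simpa using IH2
          have hs1 : (0:ℝ) ≤ ∑ j ∈ Finset.range (s'+1),
              ((K'.choose j : ℝ)) * (((N - K').choose (s'-j) : ℝ)) * t ^ j := by
            apply Finset.sum_nonneg; intro j hj; positivity
          calc t * _ + _ ≤ t * 0 + 0 := by
                apply add_le_add _ hb2
                exact mul_le_mul_of_nonneg_left hb1 ht0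
            _ = 0 := by ring
            _ ≤ _ := hrhs
        · -- main case : s' ≤ N
          set p : ℝ := ((K':ℝ)+1)/((N:ℝ)+1) with hp_def
          set r : ℝ := (((s':ℝ)+1) + ((N:ℝ) - s') * q)/((N:ℝ)+1) with hr_def
          have hNs' : (s':ℝ) ≤ (N:ℝ) := by exact_mod_cast hcase
          have hr0 : 0 ≤ r := by
            rw [hr_def]; apply div_nonneg _ (by positivity)
            have := mul_nonneg (by linarith : (0:ℝ) ≤ (N:ℝ) - s') hq0
            linarith
          have hr1 : r ≤ 1 := by
            rw [hr_def, div_le_one (by positivity)]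
            have := mul_le_of_le_one_right (by linarith : (0:ℝ) ≤ (N:ℝ) - s') hq1
            linarith
          have hru : 0 ≤ 1 + r * u := by
            have h := mul_le_mul_of_nonneg_left hu1 hr0
            linarith
          have hc1 : ((N:ℝ)+1) * c1 = ((s':ℝ)+1) * C := by
            rw [hc1_def, hC_def]
            have := Nat.add_one_mul_choose_eq N s'
            have hcast : ((N+1) * N.choose s' : ℕ) = ((N+1).choose (s'+1) * (s'+1) : ℕ) := by
              simpa [Nat.succ_eq_add_one] using this
            have hc := congrArg (Nat.cast : ℕ → ℝ) hcast
            push_cast at hc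
            linarith
          have hPascal : C = c1 + c2 := by
            rw [hc1_def, hc2_def, hC_def]
            push_cast [Nat.choose_succ_succ N s']
            ring
          have hc2 : ((N:ℝ)+1) * c2 = ((N:ℝ) - s') * C := by linear_combination (-(N:ℝ)-1) * hPascal - hc1
          have hrN : r * ((N:ℝ)+1) = ((s':ℝ)+1) + ((N:ℝ) - s') * q := by
            rw [hr_def, div_mul_cancel₀ _ (by positivity : ((N:ℝ)+1) ≠ 0)]
          have hpN : p * ((N:ℝ)+1) = (K':ℝ)+1 := by
            rw [hp_def, div_mul_cancel₀ _ (by positivity : ((N:ℝ)+1) ≠ 0)]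
          have hbracket : ((s':ℝ)+1) * t + ((N:ℝ) - s') * A1 = ((N:ℝ)+1) * (1 + r * u) := by
            rw [hA1_def]
            linear_combination (-u) * hrN - ((s':ℝ)+1) * hu_def
          have hmean2 : (((s':ℝ) * A1 + (1 + r * u))) * ((N:ℝ)+1)
              = ((1 + p * u) * ((s':ℝ)+1)) * ((N:ℝ)+1) := by
            rw [hA1_def]
            linear_combination u * hrN - ((s':ℝ)+1) * u * hpN + ((s':ℝ)+1) * u * hqN
          have hmean : ((s':ℝ) * A1 + (1 + r * u))/((s':ℝ)+1) = 1 + p * u := by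
            rw [div_eq_iff (by positivity : ((s':ℝ)+1) ≠ 0)]
            exact mul_right_cancel₀ (by positivity : ((N:ℝ)+1) ≠ 0) hmean2
          have hAMGM : A1 ^ s' * (1 + r * u) ≤ (1 + p * u) ^ (s'+1) := by
            have h := amgm_pow A1 (1 + r * u) hA1 hru s'
            rwa [hmean] at h
          have hCpos : (0:ℝ) ≤ C := by rw [hC_def]; positivity
          have hN1 : (0:ℝ) < (N:ℝ) + 1 := by positivity
          -- combine
          have hfinal : t * (c1 * A1 ^ s') + c2 * A1 ^ (s'+1) ≤ C * (1 + p * u) ^ (s'+1) := by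
            rw [← mul_le_mul_iff_of_pos_left hN1]
            have hid : ((N:ℝ)+1) * (t * (c1 * A1 ^ s') + c2 * A1 ^ (s'+1))
                = C * (A1 ^ s' * (((s':ℝ)+1) * t + ((N:ℝ) - s') * A1)) := by
              linear_combination (t * A1 ^ s') * hc1 + (A1 ^ (s'+1)) * hc2
            rw [hid, hbracket]
            calc C * (A1 ^ s' * (((N:ℝ)+1) * (1 + r * u)))
                = ((N:ℝ)+1) * (C * (A1 ^ s' * (1 + r * u))) := by ring
              _ ≤ ((N:ℝ)+1) * (C * ((1 + p * u) ^ (s'+1))) := by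
                  apply mul_le_mul_of_nonneg_left _ (le_of_lt hN1)
                  exact mul_le_mul_of_nonneg_left hAMGM hCpos
              _ = ((N:ℝ)+1) * (C * (1 + p * u) ^ (s'+1)) := by ring
          have hgoal : (((K'+1:ℕ):ℝ)/(((N+1:ℕ)):ℝ)) = p := by
            rw [hp_def]; push_cast; ring
          calc t * (∑ j ∈ Finset.range (s'+1),
                ((K'.choose j : ℝ)) * (((N - K').choose (s'-j) : ℝ)) * t ^ j)
              + ∑ j ∈ Finset.range (s'+1+1),
                ((K'.choose j : ℝ)) * (((N - K').choose (s'+1-j) : ℝ)) * t ^ j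
              ≤ t * (c1 * (1 + q * u) ^ s') + c2 * (1 + q * u) ^ (s'+1) := by
                apply add_le_add
                · apply mul_le_mul_of_nonneg_left _ ht0
                  simpa [hu_def] using IH1
                · simpa [hu_def] using IH2
            _ = t * (c1 * A1 ^ s') + c2 * A1 ^ (s'+1) := by rw [hA1_def]
            _ ≤ C * (1 + p * u) ^ (s'+1) := hfinal
            _ = ((N+1).choose (s'+1) : ℝ)
                  * (1 + (((K'+1:ℕ):ℝ)/(((N+1:ℕ)):ℝ)) * (t-1)) ^ (s'+1) := by
                rw [hgoal, ← hu_def, hC_def]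

/-- Hypergeometric lower-tail bound, Hoeffding style. -/
lemma hyper_tail_s4 (n s K c : ℕ) (hn : 1 ≤ n) (hcs : c + 1 ≤ s) (hKn : K ≤ n)
    (g : ℝ) (hg : 0 ≤ g) (hdev : g ≤ (s:ℝ) * K / n - c) :
    (∑ j ∈ Finset.range (c+1), (K.choose j : ℝ) * ((n - K).choose (s - j) : ℝ))
      ≤ (n.choose s : ℝ) * Real.exp (-2 * g ^ 2 / s) := by
  have hs : 1 ≤ s := le_trans (Nat.le_add_left 1 c) hcs
  have hsR : (0:ℝ) < s := by exact_mod_cast hs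
  have hnR : (0:ℝ) < n := by exact_mod_cast hn
  set p : ℝ := (K:ℝ)/(n:ℝ) with hp_def
  have hp0 : 0 ≤ p := by positivity
  have hp1 : p ≤ 1 := by
    rw [hp_def, div_le_one hnR]; exact_mod_cast hKn
  set d : ℝ := (s:ℝ) * p - c with hd_def
  have hgd : g ≤ d := by
    rw [hd_def, hp_def]
    have : (s:ℝ) * ((K:ℝ)/n) = (s:ℝ) * K / n := by ring
    rw [this]; exact hdev
  have hd0 : 0 ≤ d := le_trans hg hgd
  set L : ℝ := 4 * d / s with hL_def
  have hL0 : 0 ≤ L := by rw [hL_def]; positivity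
  set t : ℝ := Real.exp (-L) with ht_def
  have ht0 : 0 < t := Real.exp_pos _
  have ht1 : t ≤ 1 := Real.exp_le_one_iff.2 (by linarith)
  have htj : ∀ j : ℕ, t ^ j = Real.exp (-(L * j)) := by
    intro j
    rw [ht_def, ← Real.exp_nat_mul]
    congr 1; ring
  -- step 1 : insert t^j factors
  have step1 : (∑ j ∈ Finset.range (c+1), (K.choose j : ℝ) * ((n - K).choose (s - j) : ℝ))
      ≤ Real.exp (L * c) * ∑ j ∈ Finset.range (c+1),
          (K.choose j : ℝ) * ((n - K).choose (s - j) : ℝ) * t ^ j := by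
    rw [Finset.mul_sum]
    apply Finset.sum_le_sum
    intro j hj
    have hjc : j ≤ c := Nat.lt_succ_iff.mp (Finset.mem_range.mp hj)
    have hfac : (1:ℝ) ≤ Real.exp (L * c) * t ^ j := by
      rw [htj j, ← Real.exp_add]
      rw [show (1:ℝ) = Real.exp 0 by simp]
      apply Real.exp_le_exp.2
      have : (j:ℝ) ≤ c := by exact_mod_cast hjc
      nlinarith
    have ha : (0:ℝ) ≤ (K.choose j : ℝ) * ((n - K).choose (s - j) : ℝ) := by positivity
    calc (K.choose j : ℝ) * ((n - K).choose (s - j) : ℝ)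
        = (K.choose j : ℝ) * ((n - K).choose (s - j) : ℝ) * 1 := by ring
      _ ≤ (K.choose j : ℝ) * ((n - K).choose (s - j) : ℝ) * (Real.exp (L * c) * t ^ j) :=
          mul_le_mul_of_nonneg_left hfac ha
      _ = Real.exp (L * c) * ((K.choose j : ℝ) * ((n - K).choose (s - j) : ℝ) * t ^ j) := by ring
  -- step 2 : extend the sum
  have step2 : (∑ j ∈ Finset.range (c+1), (K.choose j : ℝ) * ((n - K).choose (s - j) : ℝ) * t ^ j)
      ≤ ∑ j ∈ Finset.range (s+1), (K.choose j : ℝ) * ((n - K).choose (s - j) : ℝ) * t ^ j := by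
    apply Finset.sum_le_sum_of_subset_of_nonneg
    · exact Finset.range_subset_range.2 (by omega)
    · intro j _ _; positivity
  -- step 3 : Chvátal
  have step3 := chvatal t (le_of_lt ht0) ht1 n K s hKn
  -- step 4 : Hoeffding's lemma
  have step4 : (1 + p * (t - 1)) ^ s ≤ Real.exp ((s:ℝ) * (-L * p + L ^ 2 / 8)) := by
    have hb := hoeffding_bernoulli p hp0 hp1 L hL0
    rw [← ht_def] at hb
    have hbase : 1 + p * (t - 1) = 1 - p + p * t := by ring
    rw [hbase]
    calc (1 - p + p * t) ^ s ≤ (Real.exp (-L * p + L ^ 2 / 8)) ^ s := by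
          apply pow_le_pow_left₀ (by nlinarith) hb
      _ = Real.exp ((s:ℝ) * (-L * p + L ^ 2 / 8)) := by rw [← Real.exp_nat_mul]
  -- final exponent computation
  have hc_eq : (c:ℝ) = (s:ℝ) * p - d := by rw [hd_def]; ring
  have hexp_eq : L * c + (s:ℝ) * (-L * p + L ^ 2 / 8) = -2 * d ^ 2 / s := by
    rw [hc_eq, hL_def]
    field_simp
    ring
  have hfin : Real.exp (L * c) * Real.exp ((s:ℝ) * (-L * p + L ^ 2 / 8))
      ≤ Real.exp (-2 * g ^ 2 / s) := by
    rw [← Real.exp_add, hexp_eq]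
    apply Real.exp_le_exp.2
    have hsq : g ^ 2 ≤ d ^ 2 := by nlinarith
    have h2 : -2 * d ^ 2 ≤ -2 * g ^ 2 := by linarith
    exact (div_le_div_iff_of_pos_right hsR).2 h2
  -- assemble
  have hC0 : (0:ℝ) ≤ (n.choose s : ℝ) := by positivity
  have hE0 : (0:ℝ) ≤ Real.exp (L * c) := le_of_lt (Real.exp_pos _)
  calc (∑ j ∈ Finset.range (c+1), (K.choose j : ℝ) * ((n - K).choose (s - j) : ℝ))
      ≤ Real.exp (L * c) * ∑ j ∈ Finset.range (c+1),
          (K.choose j : ℝ) * ((n - K).choose (s - j) : ℝ) * t ^ j := step1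
    _ ≤ Real.exp (L * c) * ∑ j ∈ Finset.range (s+1),
          (K.choose j : ℝ) * ((n - K).choose (s - j) : ℝ) * t ^ j :=
        mul_le_mul_of_nonneg_left step2 hE0
    _ ≤ Real.exp (L * c) * ((n.choose s : ℝ) * (1 + p * (t - 1)) ^ s) := by
        apply mul_le_mul_of_nonneg_left _ hE0
        rw [hp_def]
        exact step3
    _ ≤ Real.exp (L * c) * ((n.choose s : ℝ) * Real.exp ((s:ℝ) * (-L * p + L ^ 2 / 8))) := by
        apply mul_le_mul_of_nonneg_left _ hE0
        exact mul_le_mul_of_nonneg_left step4 hC0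
    _ = (n.choose s : ℝ) * (Real.exp (L * c) * Real.exp ((s:ℝ) * (-L * p + L ^ 2 / 8))) := by
        ring
    _ ≤ (n.choose s : ℝ) * Real.exp (-2 * g ^ 2 / s) :=
        mul_le_mul_of_nonneg_left hfin hC0

/-- In a sorted list, if at least `j+1` elements are `≤ v`, then the element at
index `j` is `≤ v`. -/
lemma sorted_getD_le (l : List ℝ) (hl : l.Pairwise (· ≤ ·)) (j : ℕ) (v : ℝ)
    (hcount : j + 1 ≤ l.countP (fun y => decide (y ≤ v))) : l.getD j 0 ≤ v := by
  by_contra hv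
  push_neg at hv
  have hjlen : j < l.length := by
    by_contra hj
    push_neg at hj
    rw [List.getD_eq_default _ _ hj] at hv
    have := l.countP_le_length (p := fun y => decide (y ≤ v))
    omega
  rw [List.getD_eq_getElem l 0 hjlen] at hv
  have hsplit : l = l.take j ++ l.drop j := (List.take_append_drop j l).symm
  have hcnt : l.countP (fun y => decide (y ≤ v))
      = (l.take j).countP (fun y => decide (y ≤ v))
        + (l.drop j).countP (fun y => decide (y ≤ v)) := by
    conv_lhs => rw [hsplit]
    rw [List.countP_append]
  have hdrop : (l.drop j).countP (fun y => decide (y ≤ v)) = 0 := by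
    rw [List.countP_eq_zero]
    intro a ha
    rw [List.mem_iff_getElem] at ha
    obtain ⟨i, hi, rfl⟩ := ha
    have hi' : i < l.length - j := by simpa using hi
    have hji : j + i < l.length := by omega
    have hdropget : (l.drop j)[i]'hi = l[j + i]'hji := List.getElem_drop
    rw [hdropget]
    have hle : l[j]'hjlen ≤ l[j + i]'hji := by
      rcases Nat.eq_zero_or_pos i with h0 | h0
      · subst h0; simp
      · exact List.pairwise_iff_getElem.mp hl j (j+i) hjlen hji (by omega)
    simp only [decide_eq_true_eq]
    intro hav
    exact absurd (le_trans hle hav) (not_le.2 hv)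
  have htake : (l.take j).countP (fun y => decide (y ≤ v)) ≤ j := by
    have := (l.take j).countP_le_length (p := fun y => decide (y ≤ v))
    have hlen : (l.take j).length ≤ j := by simp
    omega
  omega

/-- The sorted list of `x` over all of `Fin n` is `List.ofFn x`. -/
lemma sort_univ_map (n : ℕ) (x : Fin n → ℝ) (hx : Monotone x) :
    (Multiset.map x (Finset.univ : Finset (Fin n)).val).sort (· ≤ ·) = List.ofFn x := by
  have hmult : Multiset.map x (Finset.univ : Finset (Fin n)).val = (List.ofFn x : List ℝ) := by
    rw [Fin.univ_def]
    show Multiset.map x (List.finRange n : List (Fin n)) = _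
    rw [Multiset.map_coe, ← List.ofFn_eq_map]
  refine List.Perm.eq_of_pairwise' (Multiset.pairwise_sort _ _) hx.sortedLE_ofFn.pairwise ?_
  rw [← Multiset.coe_eq_coe, Multiset.sort_eq, hmult]

lemma kth_univ (n K : ℕ) (x : Fin n → ℝ) (hx : Monotone x) (hK1 : 1 ≤ K) (hKn : K ≤ n) :
    kthSmallest (Multiset.map x (Finset.univ : Finset (Fin n)).val) K
      = x ⟨K - 1, by omega⟩ := by
  rw [kthSmallest, sort_univ_map n x hx]
  rw [List.getD_eq_getElem _ 0 (by simp; omega)]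
  simp

/-- If at least `m` elements of the sample are among the first `K` indices, the
`m`-th smallest sampled value is at most `x ⟨K-1⟩`. -/
lemma kth_sample_le (n K m : ℕ) (x : Fin n → ℝ) (hx : Monotone x)
    (A : Finset (Fin n)) (hm : 1 ≤ m) (hK1 : 1 ≤ K) (hKn : K ≤ n)
    (hcount : m ≤ (Multiset.filter (fun i : Fin n => (i : ℕ) < K) A.val).card) :
    kthSmallest (Multiset.map x A.val) m ≤ x ⟨K - 1, by omega⟩ := by
  set v : ℝ := x ⟨K - 1, by omega⟩ with hv_def
  rw [kthSmallest]
  apply sorted_getD_le _ (Multiset.pairwise_sort _ _) (m-1) v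
  have h1 : List.countP (fun y => decide (y ≤ v)) ((Multiset.map x A.val).sort (· ≤ ·))
      = Multiset.countP (fun y => y ≤ v) (Multiset.map x A.val) := by
    rw [← Multiset.coe_countP, Multiset.sort_eq]
  rw [h1, Multiset.countP_map]
  have h2 : Multiset.filter (fun i : Fin n => (i:ℕ) < K) A.val
      ≤ Multiset.filter (fun i : Fin n => x i ≤ v) A.val := by
    apply Multiset.monotone_filter_right
    intro i hi
    rw [hv_def]
    apply hx
    rw [Fin.le_def]
    simp only []
    omega
  have h3 := Multiset.card_le_card h2
  omega

/-- The `m`-th smallest sampled value is at most the largest of all values. -/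
lemma kth_sample_le_max (n m : ℕ) (hn : 1 ≤ n) (x : Fin n → ℝ) (hx : Monotone x)
    (A : Finset (Fin n)) (hm : 1 ≤ m) (hmc : m ≤ A.card) :
    kthSmallest (Multiset.map x A.val) m ≤ x ⟨n - 1, by omega⟩ := by
  rw [kthSmallest]
  set l := (Multiset.map x A.val).sort (· ≤ ·) with hl_def
  have hlen : l.length = A.card := by
    rw [hl_def, Multiset.length_sort, Multiset.card_map]; rfl
  have hidx : m - 1 < l.length := by omega
  rw [List.getD_eq_getElem _ 0 hidx]
  have hmem : l[m-1] ∈ l := List.getElem_mem hidx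
  have hmem2 : l[m-1] ∈ Multiset.map x A.val := by
    rwa [← Multiset.mem_sort (· ≤ ·)]
  obtain ⟨i, _, hxe⟩ := Multiset.mem_map.mp hmem2
  rw [← hxe]
  apply hx
  rw [Fin.le_def]
  simp only []
  omega

lemma card_filter_lt (n K : ℕ) (hKn : K ≤ n) :
    ((Finset.univ : Finset (Fin n)).filter (fun i : Fin n => (i:ℕ) < K)).card = K := by
  rw [← Finset.card_range K]
  apply Finset.card_bij (fun (i : Fin n) _ => (i : ℕ))
  · intro a ha
    simp only [Finset.mem_filter] at ha
    simpa using ha.2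
  · intro a _ b _ h
    exact Fin.val_injective h
  · intro j hj
    have hjn : j < n := lt_of_lt_of_le (Finset.mem_range.mp hj) hKn
    exact ⟨⟨j, hjn⟩, by simp [Finset.mem_range.mp hj], rfl⟩

lemma family_card_le (n K s c : ℕ) (hKn : K ≤ n) :
    (((Finset.univ : Finset (Finset (Fin n)))).filter
       (fun A => A.card = s ∧ (A.filter (fun i : Fin n => (i:ℕ) < K)).card ≤ c)).card
    ≤ ∑ j ∈ Finset.range (c+1), K.choose j * (n-K).choose (s-j) := by
  classical
  set G := (Finset.univ : Finset (Fin n)).filter (fun i : Fin n => (i:ℕ) < K) with hG_def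
  set Gc := (Finset.univ : Finset (Fin n)).filter (fun i : Fin n => ¬ ((i:ℕ) < K)) with hGc_def
  have hGcard : G.card = K := card_filter_lt n K hKn
  have hsum : G.card + Gc.card = n := by
    rw [hG_def, hGc_def, Finset.card_filter_add_card_filter_not]
    simp
  have hGccard : Gc.card = n - K := by omega
  set T := (Finset.range (c+1)).biUnion
      (fun j => (G.powersetCard j) ×ˢ (Gc.powersetCard (s-j))) with hT_def
  have hinj : ∀ A ∈ ((Finset.univ : Finset (Finset (Fin n)))).filter
      (fun A => A.card = s ∧ (A.filter (fun i : Fin n => (i:ℕ) < K)).card ≤ c),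
      (A.filter (fun i : Fin n => (i:ℕ) < K), A.filter (fun i : Fin n => ¬((i:ℕ) < K))) ∈ T := by
    intro A hA
    simp only [Finset.mem_filter, Finset.mem_univ, true_and] at hA
    obtain ⟨hAs, hAc⟩ := hA
    have hsplit : (A.filter (fun i : Fin n => (i:ℕ) < K)).card
        + (A.filter (fun i : Fin n => ¬((i:ℕ) < K))).card = s := by
      rw [Finset.card_filter_add_card_filter_not, hAs]
    have hsub1 : A.filter (fun i : Fin n => (i:ℕ) < K) ⊆ G := by
      intro i hi
      rw [hG_def, Finset.mem_filter]
      exact ⟨Finset.mem_univ i, (Finset.mem_filter.mp hi).2⟩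
    have hsub2 : A.filter (fun i : Fin n => ¬((i:ℕ) < K)) ⊆ Gc := by
      intro i hi
      rw [hGc_def, Finset.mem_filter]
      exact ⟨Finset.mem_univ i, (Finset.mem_filter.mp hi).2⟩
    rw [hT_def, Finset.mem_biUnion]
    refine ⟨(A.filter (fun i : Fin n => (i:ℕ) < K)).card, Finset.mem_range.2 (by omega), ?_⟩
    rw [Finset.mem_product]
    constructor
    · show A.filter (fun i : Fin n => (i:ℕ) < K) ∈ G.powersetCard _
      exact Finset.mem_powersetCard.2 ⟨hsub1, rfl⟩
    · show A.filter (fun i : Fin n => ¬((i:ℕ) < K)) ∈ Gc.powersetCard _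
      refine Finset.mem_powersetCard.2 ⟨hsub2, ?_⟩
      omega
  have hcard_le := Finset.card_le_card_of_injOn
    (fun (A : Finset (Fin n)) =>
      (A.filter (fun i : Fin n => (i:ℕ) < K), A.filter (fun i : Fin n => ¬((i:ℕ) < K))))
    hinj
    (by
      intro A1 h1 A2 h2 heq
      simp only [Prod.mk.injEq] at heq
      have e1 := Finset.filter_union_filter_not_eq (fun i : Fin n => (i:ℕ) < K) A1
      have e2 := Finset.filter_union_filter_not_eq (fun i : Fin n => (i:ℕ) < K) A2
      rw [← e1, ← e2, heq.1, heq.2])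
  refine le_trans hcard_le (le_trans (Finset.card_biUnion_le) ?_)
  apply Finset.sum_le_sum
  intro j _
  rw [Finset.card_product, Finset.card_powersetCard, Finset.card_powersetCard,
    hGcard, hGccard]

/-- Corollary (b): with pivot `v := y*_{i_v}`, `i_v = min {⌈ks/n + g⌉, s}`,
`k < n/2` and `k_r := min {⌈k + 2gn/s⌉, n}`, one has
`P[x*_{k_r} < v] ≤ exp (-2g²/s)`. -/
theorem pivot_above_tail
    (n s k : ℕ) (hs : 1 ≤ s) (hsn : s ≤ n) (hk1 : 1 ≤ k) (hkn : k ≤ n)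
    (g : ℝ) (hg : 0 ≤ g) (hkhalf : (k : ℝ) < n / 2)
    (x : Fin n → ℝ) (hx : Monotone x)
    {Ω : Type*} [MeasurableSpace Ω] (μ : Measure Ω) [IsProbabilityMeasure μ]
    (S : Ω → Finset (Fin n)) (hScard : ∀ ω, (S ω).card = s)
    (hunif : ∀ A : Finset (Fin n), A.card = s →
      μ {ω | S ω = A} = 1 / (n.choose s))
    (iv : ℤ) (hiv : iv = min ⌈(k : ℝ) * s / n + g⌉ (s : ℤ))
    (kr : ℤ) (hkr : kr = min ⌈(k : ℝ) + 2 * g * n / s⌉ (n : ℤ)) :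
    μ {ω | kthSmallest ((Finset.univ : Finset (Fin n)).val.map x) kr.toNat <
           kthSmallest ((S ω).val.map x) iv.toNat} ≤
      ENNReal.ofReal (Real.exp (-2 * g ^ 2 / s)) := by
  classical
  have hn1 : 1 ≤ n := le_trans hs hsn
  have hnR : (0:ℝ) < n := by exact_mod_cast hn1
  have hsR : (0:ℝ) < s := by exact_mod_cast hs
  have hkR : (1:ℝ) ≤ k := by exact_mod_cast hk1
  -- facts about iv
  have hivceil : iv ≤ ⌈(k : ℝ) * s / n + g⌉ := by rw [hiv]; exact min_le_left _ _
  have hivs : iv ≤ (s:ℤ) := by rw [hiv]; exact min_le_right _ _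
  have hiv1 : 1 ≤ iv := by
    rw [hiv]
    apply le_min
    · apply Int.ceil_pos.2
      have : (0:ℝ) < (k:ℝ) * s / n := by positivity
      linarith
    · exact_mod_cast hs
  set m : ℕ := iv.toNat with hm_def
  have hmiv : (m : ℤ) = iv := Int.toNat_of_nonneg (by omega)
  have hm1 : 1 ≤ m := by omega
  have hms : m ≤ s := by omega
  set c : ℕ := m - 1 with hc_def
  have hcm : c + 1 = m := by omega
  have hcR : (c:ℝ) < (k:ℝ) * s / n + g := by
    have h1 : ((⌈(k : ℝ) * s / n + g⌉ : ℤ) : ℝ) < (k:ℝ) * s / n + g + 1 :=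
      Int.ceil_lt_add_one _
    have h2 : (c:ℝ) = (m:ℝ) - 1 := by
      have : (1:ℕ) ≤ m := hm1
      push_cast [hc_def, Nat.cast_sub this]
      ring
    have h3 : (m:ℝ) ≤ ((⌈(k : ℝ) * s / n + g⌉ : ℤ) : ℝ) := by
      exact_mod_cast (hmiv ▸ hivceil : (m:ℤ) ≤ ⌈(k : ℝ) * s / n + g⌉)
    linarith
  by_cases hcase : (k : ℝ) + 2 * g * n / s ≤ n
  · -- main case: kr is the ceiling
    have hkrceil : kr = ⌈(k : ℝ) + 2 * g * n / s⌉ := by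
      rw [hkr]
      exact min_eq_left (Int.ceil_le.2 (by exact_mod_cast hcase))
    have hx0 : (0:ℝ) < (k:ℝ) + 2 * g * n / s := by
      have h2 : (0:ℝ) ≤ 2 * g * n / s := by positivity
      linarith
    have hkr1 : 1 ≤ kr := by
      rw [hkrceil]
      exact Int.ceil_pos.2 hx0
    set K : ℕ := kr.toNat with hK_def
    have hKkr : (K:ℤ) = kr := Int.toNat_of_nonneg (by omega)
    have hK1 : 1 ≤ K := by omega
    have hKn : K ≤ n := by
      have h := hkr ▸ (min_le_right ⌈(k : ℝ) + 2 * g * n / s⌉ (n:ℤ))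
      omega
    have hKge : (k:ℝ) + 2 * g * n / s ≤ (K:ℝ) := by
      have h1 : ((k:ℝ) + 2 * g * n / s) ≤ ((⌈(k:ℝ) + 2 * g * n / s⌉ : ℤ):ℝ) := Int.le_ceil _
      have h2 : ((K:ℕ):ℝ) = ((kr:ℤ):ℝ) := by exact_mod_cast hKkr
      rw [h2, hkrceil]
      exact h1
    have hdev : g ≤ (s:ℝ) * K / n - c := by
      have h1 : (s:ℝ) * ((k:ℝ) + 2 * g * n / s) / n ≤ (s:ℝ) * K / n := by
        gcongr
      have h2 : (s:ℝ) * ((k:ℝ) + 2 * g * n / s) / n = (k:ℝ) * s / n + 2 * g := by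
        field_simp
      linarith
    set 𝒜 : Finset (Finset (Fin n)) := (Finset.univ).filter
      (fun A => A.card = s ∧ (A.filter (fun i : Fin n => (i:ℕ) < K)).card ≤ c) with hA_def
    have hincl : {ω | kthSmallest ((Finset.univ : Finset (Fin n)).val.map x) K <
           kthSmallest ((S ω).val.map x) m} ⊆ ⋃ A ∈ 𝒜, {ω | S ω = A} := by
      intro ω hω
      simp only [Set.mem_setOf_eq] at hω
      have hSA : S ω ∈ 𝒜 := by
        rw [hA_def, Finset.mem_filter]
        refine ⟨Finset.mem_univ _, hScard ω, ?_⟩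
        by_contra hgt
        push_neg at hgt
        have hcnt : m ≤ (Multiset.filter (fun i : Fin n => (i:ℕ) < K) (S ω).val).card := by
          have he : ((S ω).filter (fun i : Fin n => (i:ℕ) < K)).card
              = (Multiset.filter (fun i : Fin n => (i:ℕ) < K) (S ω).val).card := by
            rfl
          omega
        have hle := kth_sample_le n K m x hx (S ω) hm1 hK1 hKn hcnt
        have huniv : kthSmallest ((Finset.univ : Finset (Fin n)).val.map x) K
            = x ⟨K-1, by omega⟩ := kth_univ n K x hx hK1 hKn
        rw [huniv] at hω
        exact absurd hle (not_le.2 hω)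
      exact Set.mem_biUnion hSA (show ω ∈ {ω' | S ω' = S ω} from rfl)
    have hmeas : μ {ω | kthSmallest ((Finset.univ : Finset (Fin n)).val.map x) K <
           kthSmallest ((S ω).val.map x) m} ≤ (∑ A ∈ 𝒜, μ {ω | S ω = A}) :=
      le_trans (measure_mono hincl) (measure_biUnion_finset_le _ _)
    have hsum : (∑ A ∈ 𝒜, μ {ω | S ω = A}) = 𝒜.card * (1 / (n.choose s : ENNReal)) := by
      rw [Finset.sum_congr rfl (fun A hA => hunif A
        (by rw [hA_def, Finset.mem_filter] at hA; exact hA.2.1))]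
      rw [Finset.sum_const, nsmul_eq_mul]
    have hCpos : 0 < n.choose s := Nat.choose_pos hsn
    have hCR : (0:ℝ) < (n.choose s : ℝ) := by exact_mod_cast hCpos
    have hreal : (𝒜.card:ℝ) ≤ (n.choose s : ℝ) * Real.exp (-2 * g^2 / s) := by
      have h1 : (𝒜.card:ℝ) ≤ ∑ j ∈ Finset.range (c+1),
          (K.choose j:ℝ) * ((n-K).choose (s-j):ℝ) := by
        have h := family_card_le n K s c hKn
        rw [← hA_def] at h
        exact_mod_cast h
      have h2 := hyper_tail_s4 n s K c hn1 (by omega : c+1 ≤ s) hKn g hg hdev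
      linarith
    calc μ {ω | kthSmallest ((Finset.univ : Finset (Fin n)).val.map x) K <
           kthSmallest ((S ω).val.map x) m}
        ≤ 𝒜.card * (1 / (n.choose s : ENNReal)) := hsum ▸ hmeas
      _ = ENNReal.ofReal ((𝒜.card:ℝ) * (1 / (n.choose s:ℝ))) := by
          rw [ENNReal.ofReal_mul (by positivity)]
          congr 1
          · exact (ENNReal.ofReal_natCast _).symm
          · rw [ENNReal.ofReal_div_of_pos hCR, ENNReal.ofReal_one, ENNReal.ofReal_natCast]
      _ ≤ ENNReal.ofReal (Real.exp (-2 * g ^ 2 / s)) := by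
          apply ENNReal.ofReal_le_ofReal
          rw [mul_one_div, div_le_iff₀ hCR]
          calc (𝒜.card:ℝ) ≤ (n.choose s : ℝ) * Real.exp (-2 * g^2 / s) := hreal
            _ = Real.exp (-2 * g ^ 2 / s) * (n.choose s : ℝ) := by ring
  · -- degenerate case : kr = n, the event is empty
    have hlt : (n:ℝ) < (k:ℝ) + 2 * g * n / s := not_le.mp hcase
    have hkrn : kr = (n:ℤ) := by
      rw [hkr]
      apply min_eq_right
      have h1 : ((n:ℤ):ℝ) ≤ ((⌈(k:ℝ) + 2 * g * n / s⌉ : ℤ):ℝ) := by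
        push_cast
        exact le_trans (le_of_lt hlt) (Int.le_ceil _)
      exact_mod_cast h1
    have hkrt : kr.toNat = n := by
      rw [hkrn]
      exact Int.toNat_natCast n
    have hempty : {ω | kthSmallest ((Finset.univ : Finset (Fin n)).val.map x) kr.toNat <
           kthSmallest ((S ω).val.map x) m} = ∅ := by
      rw [Set.eq_empty_iff_forall_notMem]
      intro ω hω
      simp only [Set.mem_setOf_eq] at hω
      rw [hkrt] at hω
      have huniv : kthSmallest ((Finset.univ : Finset (Fin n)).val.map x) n
          = x ⟨n-1, by omega⟩ := kth_univ n n x hx hn1 le_rfl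
      have hsamp : kthSmallest ((S ω).val.map x) m ≤ x ⟨n-1, by omega⟩ :=
        kth_sample_le_max n m hn1 x hx (S ω) hm1 (by rw [hScard]; exact hms)
      rw [huniv] at hω
      exact absurd hsamp (not_le.2 hω)
    rw [hempty]
    simp
end
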